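/- arXiv:1205.1384 — 11 statements merged into one kernel-verified Lean document; each statement's English description precedes it below -/
import Mathlib

section
/- If η: ℤ² → ℝ is the unique function satisfying η(0,0)=1 and the squiral recursion relations (η(3m,3n)=η(m,n); η(3m,3n+1)=-(2/9)η(m,n)+(1/3)η(m,n+1); η(3m,3n+2)=(1/3)η(m,n)-(2/9)η(m,n+1); η(3m+1,3n)=-(2/9)η(m,n)+(1/3)η(m+1,n); η(3m+1,3n+1)=-(2/9)(η(m+1,n)+η(m,n+1))+(1/9)η(m+1,n+1); η(3m+1,3n+2)=-(2/9)(η(m,n)+η(m+1,n+1))+(1/9)η(m+1,n); η(3m+2,3n)=(1/3)η(m,n)-(2/9)η(m+1,n); η(3m+2,3n+1)=-(2/9)(η(m,n)+η(m+1,n+1))+(1/9)η(m,n+1); η(3m+2,3n+2)=(1/9)η(m,n)-(2/9)(η(m+1,n)+η(m,n+1)) for all m,n ∈ ℤ), then η(0,1)=-1/3, η(1,1)=1/6, η(0,2)=11/27, η(2,2)=7/27, and η(1,2)=-8/27. -/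
/-- The nine squiral recursion relations for the autocorrelation coefficients. -/
def SquiralRec (η : ℤ → ℤ → ℝ) : Prop :=
  ∀ m n : ℤ,
    η (3*m) (3*n) = η m n ∧
    η (3*m) (3*n+1) = -(2/9) * η m n + (1/3) * η m (n+1) ∧
    η (3*m) (3*n+2) = (1/3) * η m n - (2/9) * η m (n+1) ∧
    η (3*m+1) (3*n) = -(2/9) * η m n + (1/3) * η (m+1) n ∧
    η (3*m+1) (3*n+1) = -(2/9) * (η (m+1) n + η m (n+1)) + (1/9) * η (m+1) (n+1) ∧
    η (3*m+1) (3*n+2) = -(2/9) * (η m n + η (m+1) (n+1)) + (1/9) * η (m+1) n ∧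
    η (3*m+2) (3*n) = (1/3) * η m n - (2/9) * η (m+1) n ∧
    η (3*m+2) (3*n+1) = -(2/9) * (η m n + η (m+1) (n+1)) + (1/9) * η m (n+1) ∧
    η (3*m+2) (3*n+2) = (1/9) * η m n - (2/9) * (η (m+1) n + η m (n+1))

theorem squiral_special_values (η : ℤ → ℤ → ℝ)
    (hrec : SquiralRec η) (h0 : η 0 0 = 1) :
    η 0 1 = -(1/3) ∧ η 1 1 = 1/6 ∧ η 0 2 = 11/27 ∧ η 2 2 = 7/27 ∧ η 1 2 = -(8/27) := by
  obtain ⟨-, h2, h3, h4, h5, h6, -, -, h9⟩ := hrec 0 0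
  norm_num [h0] at h2 h3 h4 h5 h6 h9
  have e01 : η 0 1 = -(1/3) := by linarith
  have e10 : η 1 0 = -(1/3) := by linarith
  have e11 : η 1 1 = 1/6 := by
    rw [e01, e10] at h5; linarith
  refine ⟨e01, e11, ?_, ?_, ?_⟩
  · rw [e01] at h3; linarith
  · rw [e01, e10] at h9; linarith
  · rw [e10, e11] at h6; linarith
end

section
/- Let η: ℤ² → ℝ satisfy η(0,0)=1 and the squiral recursion relations for all m,n ∈ ℤ. Then (-1)^{m+n} η(m,n) > 0 for all m,n ∈ ℤ; in particular no coefficient η(m,n) vanishes. -/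
theorem squiral_sign_property (η : ℤ → ℤ → ℝ)
    (hrec : SquiralRec η) (h0 : η 0 0 = 1)
    (hsym : ∀ m n : ℤ, η (-m) n = η m n ∧ η m (-n) = η m n ∧ η m n = η n m) :
    ∀ m n : ℤ, 0 < (-1 : ℝ) ^ (m + n) * η m n := by
  have h10 : η 1 0 = -(1/3) := by
    have h := (hrec 0 0).2.2.2.1; norm_num [h0] at h; linarith
  have h01 : η 0 1 = -(1/3) := by
    have h := (hrec 0 0).2.1; norm_num [h0] at h; linarith
  have h11 : η 1 1 = 1/6 := by
    have h := (hrec 0 0).2.2.2.2.1; norm_num [h10, h01] at h; linarith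
  have h20 : η 2 0 = 11/27 := by
    have h := (hrec 0 0).2.2.2.2.2.2.1; norm_num [h0, h10] at h; linarith
  have h02 : η 0 2 = 11/27 := by
    have h := (hrec 0 0).2.2.1; norm_num [h0, h01] at h; linarith
  have h12 : η 1 2 = -(8/27) := by
    have h := (hrec 0 0).2.2.2.2.2.1; norm_num [h0, h10, h11] at h; linarith
  have h21 : η 2 1 = -(8/27) := by
    have h := (hrec 0 0).2.2.2.2.2.2.2.1; norm_num [h0, h01, h11] at h; linarith
  have h22 : η 2 2 = 7/27 := by
    have h := (hrec 0 0).2.2.2.2.2.2.2.2; norm_num [h0, h10, h01] at h; linarith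
  have key : ∀ s : ℕ, ∀ m n : ℤ, 0 ≤ m → 0 ≤ n → m + n ≤ (s : ℤ) →
      0 < (-1 : ℝ) ^ (m + n) * η m n := by
    intro s
    induction s with
    | zero =>
      intro m n hm hn hs
      have hm0 : m = 0 := by omega
      have hn0 : n = 0 := by omega
      subst hm0; subst hn0
      norm_num [h0]
    | succ s ih =>
      intro m n hm hn hs
      by_cases hle : m + n ≤ (s : ℤ)
      · exact ih m n hm hn hle
      by_cases hsmall : m ≤ 2 ∧ n ≤ 2
      · obtain ⟨hm2, hn2⟩ := hsmall
        interval_cases m <;> interval_cases n <;>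
          norm_num [h0, h10, h01, h11, h20, h02, h21, h12, h22]
      obtain ⟨a, i, ha, hi, rfl⟩ : ∃ a i, 0 ≤ a ∧ (i = 0 ∨ i = 1 ∨ i = 2) ∧ m = 3*a + i :=
        ⟨m / 3, m % 3, by omega, by omega, by omega⟩
      obtain ⟨b, j, hb, hj, rfl⟩ : ∃ b j, 0 ≤ b ∧ (j = 0 ∨ j = 1 ∨ j = 2) ∧ n = 3*b + j :=
        ⟨n / 3, n % 3, by omega, by omega, by omega⟩
      rcases hi with rfl | rfl | rfl <;> rcases hj with rfl | rfl | rfl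
      · -- case i=0, j=0
        simp only [add_zero]
        have H0 := ih a b ha hb (by omega)
        rw [(hrec a b).1]
        rcases Int.even_or_odd (a+b) with ⟨t,ht⟩|⟨t,ht⟩
        · -- a+b even
          rw [show ((-1:ℝ)^(a+b) = 1) from Even.neg_one_zpow ⟨t, by omega⟩] at H0
          rw [show ((-1:ℝ)^(3*a+3*b) = 1) from Even.neg_one_zpow ⟨3*t, by omega⟩]
          linarith
        · -- a+b odd
          rw [show ((-1:ℝ)^(a+b) = -1) from Odd.neg_one_zpow ⟨t, by omega⟩] at H0
          rw [show ((-1:ℝ)^(3*a+3*b) = -1) from Odd.neg_one_zpow ⟨3*t+1, by omega⟩]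
          linarith
      · -- case i=0, j=1
        simp only [add_zero]
        have H0 := ih a b ha hb (by omega)
        have H1 := ih a (b+1) ha (by omega) (by omega)
        rw [(hrec a b).2.1]
        rcases Int.even_or_odd (a+b) with ⟨t,ht⟩|⟨t,ht⟩
        · -- a+b even
          rw [show ((-1:ℝ)^(a+b) = 1) from Even.neg_one_zpow ⟨t, by omega⟩] at H0
          rw [show ((-1:ℝ)^(a+(b+1)) = -1) from Odd.neg_one_zpow ⟨t, by omega⟩] at H1
          rw [show ((-1:ℝ)^(3*a+(3*b+1)) = -1) from Odd.neg_one_zpow ⟨3*t, by omega⟩]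
          linarith
        · -- a+b odd
          rw [show ((-1:ℝ)^(a+b) = -1) from Odd.neg_one_zpow ⟨t, by omega⟩] at H0
          rw [show ((-1:ℝ)^(a+(b+1)) = 1) from Even.neg_one_zpow ⟨t+1, by omega⟩] at H1
          rw [show ((-1:ℝ)^(3*a+(3*b+1)) = 1) from Even.neg_one_zpow ⟨3*t+2, by omega⟩]
          linarith
      · -- case i=0, j=2
        simp only [add_zero]
        have H0 := ih a b ha hb (by omega)
        have H1 := ih a (b+1) ha (by omega) (by omega)
        rw [(hrec a b).2.2.1]
        rcases Int.even_or_odd (a+b) with ⟨t,ht⟩|⟨t,ht⟩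
        · -- a+b even
          rw [show ((-1:ℝ)^(a+b) = 1) from Even.neg_one_zpow ⟨t, by omega⟩] at H0
          rw [show ((-1:ℝ)^(a+(b+1)) = -1) from Odd.neg_one_zpow ⟨t, by omega⟩] at H1
          rw [show ((-1:ℝ)^(3*a+(3*b+2)) = 1) from Even.neg_one_zpow ⟨3*t+1, by omega⟩]
          linarith
        · -- a+b odd
          rw [show ((-1:ℝ)^(a+b) = -1) from Odd.neg_one_zpow ⟨t, by omega⟩] at H0
          rw [show ((-1:ℝ)^(a+(b+1)) = 1) from Even.neg_one_zpow ⟨t+1, by omega⟩] at H1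
          rw [show ((-1:ℝ)^(3*a+(3*b+2)) = -1) from Odd.neg_one_zpow ⟨3*t+2, by omega⟩]
          linarith
      · -- case i=1, j=0
        simp only [add_zero]
        have H0 := ih a b ha hb (by omega)
        have H1 := ih (a+1) b (by omega) hb (by omega)
        rw [(hrec a b).2.2.2.1]
        rcases Int.even_or_odd (a+b) with ⟨t,ht⟩|⟨t,ht⟩
        · -- a+b even
          rw [show ((-1:ℝ)^(a+b) = 1) from Even.neg_one_zpow ⟨t, by omega⟩] at H0
          rw [show ((-1:ℝ)^(a+1+b) = -1) from Odd.neg_one_zpow ⟨t, by omega⟩] at H1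
          rw [show ((-1:ℝ)^(3*a+1+3*b) = -1) from Odd.neg_one_zpow ⟨3*t, by omega⟩]
          linarith
        · -- a+b odd
          rw [show ((-1:ℝ)^(a+b) = -1) from Odd.neg_one_zpow ⟨t, by omega⟩] at H0
          rw [show ((-1:ℝ)^(a+1+b) = 1) from Even.neg_one_zpow ⟨t+1, by omega⟩] at H1
          rw [show ((-1:ℝ)^(3*a+1+3*b) = 1) from Even.neg_one_zpow ⟨3*t+2, by omega⟩]
          linarith
      · -- case i=1, j=1
        have H0 := ih (a+1) b (by omega) hb (by omega)
        have H1 := ih a (b+1) ha (by omega) (by omega)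
        have H2 := ih (a+1) (b+1) (by omega) (by omega) (by omega)
        rw [(hrec a b).2.2.2.2.1]
        rcases Int.even_or_odd (a+b) with ⟨t,ht⟩|⟨t,ht⟩
        · -- a+b even
          rw [show ((-1:ℝ)^(a+1+b) = -1) from Odd.neg_one_zpow ⟨t, by omega⟩] at H0
          rw [show ((-1:ℝ)^(a+(b+1)) = -1) from Odd.neg_one_zpow ⟨t, by omega⟩] at H1
          rw [show ((-1:ℝ)^(a+1+(b+1)) = 1) from Even.neg_one_zpow ⟨t+1, by omega⟩] at H2
          rw [show ((-1:ℝ)^(3*a+1+(3*b+1)) = 1) from Even.neg_one_zpow ⟨3*t+1, by omega⟩]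
          linarith
        · -- a+b odd
          rw [show ((-1:ℝ)^(a+1+b) = 1) from Even.neg_one_zpow ⟨t+1, by omega⟩] at H0
          rw [show ((-1:ℝ)^(a+(b+1)) = 1) from Even.neg_one_zpow ⟨t+1, by omega⟩] at H1
          rw [show ((-1:ℝ)^(a+1+(b+1)) = -1) from Odd.neg_one_zpow ⟨t+1, by omega⟩] at H2
          rw [show ((-1:ℝ)^(3*a+1+(3*b+1)) = -1) from Odd.neg_one_zpow ⟨3*t+2, by omega⟩]
          linarith
      · -- case i=1, j=2
        have H0 := ih a b ha hb (by omega)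
        have H1 := ih (a+1) (b+1) (by omega) (by omega) (by omega)
        have H2 := ih (a+1) b (by omega) hb (by omega)
        rw [(hrec a b).2.2.2.2.2.1]
        rcases Int.even_or_odd (a+b) with ⟨t,ht⟩|⟨t,ht⟩
        · -- a+b even
          rw [show ((-1:ℝ)^(a+b) = 1) from Even.neg_one_zpow ⟨t, by omega⟩] at H0
          rw [show ((-1:ℝ)^(a+1+(b+1)) = 1) from Even.neg_one_zpow ⟨t+1, by omega⟩] at H1
          rw [show ((-1:ℝ)^(a+1+b) = -1) from Odd.neg_one_zpow ⟨t, by omega⟩] at H2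
          rw [show ((-1:ℝ)^(3*a+1+(3*b+2)) = -1) from Odd.neg_one_zpow ⟨3*t+1, by omega⟩]
          linarith
        · -- a+b odd
          rw [show ((-1:ℝ)^(a+b) = -1) from Odd.neg_one_zpow ⟨t, by omega⟩] at H0
          rw [show ((-1:ℝ)^(a+1+(b+1)) = -1) from Odd.neg_one_zpow ⟨t+1, by omega⟩] at H1
          rw [show ((-1:ℝ)^(a+1+b) = 1) from Even.neg_one_zpow ⟨t+1, by omega⟩] at H2
          rw [show ((-1:ℝ)^(3*a+1+(3*b+2)) = 1) from Even.neg_one_zpow ⟨3*t+3, by omega⟩]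
          linarith
      · -- case i=2, j=0
        simp only [add_zero]
        have H0 := ih a b ha hb (by omega)
        have H1 := ih (a+1) b (by omega) hb (by omega)
        rw [(hrec a b).2.2.2.2.2.2.1]
        rcases Int.even_or_odd (a+b) with ⟨t,ht⟩|⟨t,ht⟩
        · -- a+b even
          rw [show ((-1:ℝ)^(a+b) = 1) from Even.neg_one_zpow ⟨t, by omega⟩] at H0
          rw [show ((-1:ℝ)^(a+1+b) = -1) from Odd.neg_one_zpow ⟨t, by omega⟩] at H1
          rw [show ((-1:ℝ)^(3*a+2+3*b) = 1) from Even.neg_one_zpow ⟨3*t+1, by omega⟩]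
          linarith
        · -- a+b odd
          rw [show ((-1:ℝ)^(a+b) = -1) from Odd.neg_one_zpow ⟨t, by omega⟩] at H0
          rw [show ((-1:ℝ)^(a+1+b) = 1) from Even.neg_one_zpow ⟨t+1, by omega⟩] at H1
          rw [show ((-1:ℝ)^(3*a+2+3*b) = -1) from Odd.neg_one_zpow ⟨3*t+2, by omega⟩]
          linarith
      · -- case i=2, j=1
        have H0 := ih a b ha hb (by omega)
        have H1 := ih (a+1) (b+1) (by omega) (by omega) (by omega)
        have H2 := ih a (b+1) ha (by omega) (by omega)
        rw [(hrec a b).2.2.2.2.2.2.2.1]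
        rcases Int.even_or_odd (a+b) with ⟨t,ht⟩|⟨t,ht⟩
        · -- a+b even
          rw [show ((-1:ℝ)^(a+b) = 1) from Even.neg_one_zpow ⟨t, by omega⟩] at H0
          rw [show ((-1:ℝ)^(a+1+(b+1)) = 1) from Even.neg_one_zpow ⟨t+1, by omega⟩] at H1
          rw [show ((-1:ℝ)^(a+(b+1)) = -1) from Odd.neg_one_zpow ⟨t, by omega⟩] at H2
          rw [show ((-1:ℝ)^(3*a+2+(3*b+1)) = -1) from Odd.neg_one_zpow ⟨3*t+1, by omega⟩]
          linarith
        · -- a+b odd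
          rw [show ((-1:ℝ)^(a+b) = -1) from Odd.neg_one_zpow ⟨t, by omega⟩] at H0
          rw [show ((-1:ℝ)^(a+1+(b+1)) = -1) from Odd.neg_one_zpow ⟨t+1, by omega⟩] at H1
          rw [show ((-1:ℝ)^(a+(b+1)) = 1) from Even.neg_one_zpow ⟨t+1, by omega⟩] at H2
          rw [show ((-1:ℝ)^(3*a+2+(3*b+1)) = 1) from Even.neg_one_zpow ⟨3*t+3, by omega⟩]
          linarith
      · -- case i=2, j=2
        have H0 := ih a b ha hb (by omega)
        have H1 := ih (a+1) b (by omega) hb (by omega)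
        have H2 := ih a (b+1) ha (by omega) (by omega)
        rw [(hrec a b).2.2.2.2.2.2.2.2]
        rcases Int.even_or_odd (a+b) with ⟨t,ht⟩|⟨t,ht⟩
        · -- a+b even
          rw [show ((-1:ℝ)^(a+b) = 1) from Even.neg_one_zpow ⟨t, by omega⟩] at H0
          rw [show ((-1:ℝ)^(a+1+b) = -1) from Odd.neg_one_zpow ⟨t, by omega⟩] at H1
          rw [show ((-1:ℝ)^(a+(b+1)) = -1) from Odd.neg_one_zpow ⟨t, by omega⟩] at H2
          rw [show ((-1:ℝ)^(3*a+2+(3*b+2)) = 1) from Even.neg_one_zpow ⟨3*t+2, by omega⟩]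
          linarith
        · -- a+b odd
          rw [show ((-1:ℝ)^(a+b) = -1) from Odd.neg_one_zpow ⟨t, by omega⟩] at H0
          rw [show ((-1:ℝ)^(a+1+b) = 1) from Even.neg_one_zpow ⟨t+1, by omega⟩] at H1
          rw [show ((-1:ℝ)^(a+(b+1)) = 1) from Even.neg_one_zpow ⟨t+1, by omega⟩] at H2
          rw [show ((-1:ℝ)^(3*a+2+(3*b+2)) = -1) from Odd.neg_one_zpow ⟨3*t+3, by omega⟩]
          linarith

  intro m n
  have hsum : |m| + |n| ≤ ((|m| + |n|).toNat : ℤ) := by omega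
  have H := key (|m| + |n|).toNat |m| |n| (abs_nonneg m) (abs_nonneg n) hsum
  have heq : η |m| |n| = η m n := by
    rcases abs_choice m with h1 | h1 <;> rcases abs_choice n with h2 | h2 <;>
      rw [h1, h2]
    · exact (hsym m n).2.1
    · exact (hsym m n).1
    · calc η (-m) (-n) = η m (-n) := (hsym m (-n)).1
        _ = η m n := (hsym m n).2.1
  have hexp : (-1 : ℝ) ^ (|m| + |n|) = (-1 : ℝ) ^ (m + n) := by
    have hev : Even (|m| + |n| - (m + n)) := by
      rcases abs_choice m with h1 | h1 <;> rcases abs_choice n with h2 | h2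
      · exact ⟨0, by omega⟩
      · exact ⟨-n, by omega⟩
      · exact ⟨-m, by omega⟩
      · exact ⟨-m - n, by omega⟩
    obtain ⟨t, ht⟩ := hev
    have hk : |m| + |n| = (m + n) + 2 * t := by omega
    rw [hk, zpow_add₀ (by norm_num : (-1:ℝ) ≠ 0), zpow_mul]
    norm_num
  rw [hexp, heq] at H
  exact H
end

section
/- Let η: ℤ² → ℝ satisfy η(0,0)=1, the squiral recursion relations, and the sign property (-1)^{m+n} η(m,n) > 0. Then η(m,0)² - η(m,n)² ≥ 0 for all m,n ∈ ℤ, i.e. |η(m,n)| ≤ |η(m,0)|. -/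
namespace SquiralProof

noncomputable def A (η : ℤ → ℤ → ℝ) (m n : ℤ) : ℝ := (-1) ^ (m + n) * η m n

lemma Epar (j k c : ℤ) (h : j = k + 2 * c) : ((-1 : ℝ)) ^ j = (-1 : ℝ) ^ k := by
  subst h
  rw [zpow_add₀ (by norm_num : (-1 : ℝ) ≠ 0), zpow_mul]
  norm_num

lemma Opar (j k c : ℤ) (h : j = k + 2 * c + 1) : ((-1 : ℝ)) ^ j = -(-1 : ℝ) ^ k := by
  subst h
  rw [zpow_add_one₀ (by norm_num : (-1 : ℝ) ≠ 0), Epar (k + 2*c) k c rfl]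
  ring

lemma Apos (η : ℤ → ℤ → ℝ) (hsign : ∀ m n : ℤ, 0 < (-1 : ℝ) ^ (m + n) * η m n)
    (m n : ℤ) : 0 < A η m n := hsign m n

lemma Arec (η : ℤ → ℤ → ℝ) (hrec : SquiralRec η) (m n : ℤ) :
    A η (3*m) (3*n) = A η m n ∧
    A η (3*m) (3*n+1) = 2/9 * A η m n + 1/3 * A η m (n+1) ∧
    A η (3*m) (3*n+2) = 1/3 * A η m n + 2/9 * A η m (n+1) ∧
    A η (3*m+1) (3*n) = 2/9 * A η m n + 1/3 * A η (m+1) n ∧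
    A η (3*m+1) (3*n+1) = 2/9 * (A η (m+1) n + A η m (n+1)) + 1/9 * A η (m+1) (n+1) ∧
    A η (3*m+1) (3*n+2) = 2/9 * (A η m n + A η (m+1) (n+1)) + 1/9 * A η (m+1) n ∧
    A η (3*m+2) (3*n) = 1/3 * A η m n + 2/9 * A η (m+1) n ∧
    A η (3*m+2) (3*n+1) = 2/9 * (A η m n + A η (m+1) (n+1)) + 1/9 * A η m (n+1) ∧
    A η (3*m+2) (3*n+2) = 1/9 * A η m n + 2/9 * (A η (m+1) n + A η m (n+1)) := by
  obtain ⟨h1, h2, h3, h4, h5, h6, h7, h8, h9⟩ := hrec m n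
  refine ⟨?_, ?_, ?_, ?_, ?_, ?_, ?_, ?_, ?_⟩ <;> simp only [A]
  · rw [h1, Epar (3*m+3*n) (m+n) (m+n) (by ring)]
  · rw [h2, Opar (3*m+(3*n+1)) (m+n) (m+n) (by ring), Opar (m+(n+1)) (m+n) 0 (by ring)]; ring
  · rw [h3, Epar (3*m+(3*n+2)) (m+n) (m+n+1) (by ring), Opar (m+(n+1)) (m+n) 0 (by ring)]; ring
  · rw [h4, Opar (3*m+1+3*n) (m+n) (m+n) (by ring), Opar (m+1+n) (m+n) 0 (by ring)]; ring
  · rw [h5, Epar (3*m+1+(3*n+1)) (m+n) (m+n+1) (by ring), Opar (m+1+n) (m+n) 0 (by ring),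
      Opar (m+(n+1)) (m+n) 0 (by ring), Epar (m+1+(n+1)) (m+n) 1 (by ring)]; ring
  · rw [h6, Opar (3*m+1+(3*n+2)) (m+n) (m+n+1) (by ring), Epar (m+1+(n+1)) (m+n) 1 (by ring),
      Opar (m+1+n) (m+n) 0 (by ring)]; ring
  · rw [h7, Epar (3*m+2+3*n) (m+n) (m+n+1) (by ring), Opar (m+1+n) (m+n) 0 (by ring)]; ring
  · rw [h8, Opar (3*m+2+(3*n+1)) (m+n) (m+n+1) (by ring), Epar (m+1+(n+1)) (m+n) 1 (by ring),
      Opar (m+(n+1)) (m+n) 0 (by ring)]; ring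
  · rw [h9, Epar (3*m+2+(3*n+2)) (m+n) (m+n+2) (by ring), Opar (m+1+n) (m+n) 0 (by ring),
      Opar (m+(n+1)) (m+n) 0 (by ring)]; ring

lemma Aswap (η : ℤ → ℤ → ℝ)
    (hsym : ∀ m n : ℤ, η (-m) n = η m n ∧ η m (-n) = η m n ∧ η m n = η n m)
    (m n : ℤ) : A η m n = A η n m := by
  simp only [A]
  rw [(hsym m n).2.2, add_comm]

lemma Aabs (η : ℤ → ℤ → ℝ)
    (hsym : ∀ m n : ℤ, η (-m) n = η m n ∧ η m (-n) = η m n ∧ η m n = η n m)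
    (m n : ℤ) : A η |m| |n| = A η m n := by
  have e1 : η |m| |n| = η m n := by
    rcases abs_choice m with h | h <;> rcases abs_choice n with h' | h' <;> rw [h, h']
    · exact (hsym m n).2.1
    · exact (hsym m n).1
    · exact ((hsym m (-n)).1).trans (hsym m n).2.1
  have e2 : ((-1 : ℝ)) ^ (|m| + |n|) = (-1 : ℝ) ^ (m + n) := by
    rcases abs_choice m with h | h <;> rcases abs_choice n with h' | h' <;> rw [h, h']
    · exact Epar _ _ (-n) (by ring)
    · exact Epar _ _ (-m) (by ring)
    · exact Epar _ _ (-(m+n)) (by ring)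
  simp only [A]
  rw [e1, e2]

lemma Asq (η : ℤ → ℤ → ℝ) (m n : ℤ) : (A η m n) ^ 2 = (η m n) ^ 2 := by
  simp only [A, mul_pow]
  have h2 : ((-1 : ℝ) ^ (m + n)) = 1 ∨ ((-1 : ℝ) ^ (m + n)) = -1 := by
    rcases Int.even_or_odd (m + n) with ⟨c, hc⟩ | ⟨c, hc⟩
    · left; rw [Epar (m+n) 0 c (by omega)]; norm_num
    · right; rw [Opar (m+n) 0 c (by omega)]; norm_num
  rcases h2 with h2 | h2 <;> rw [h2] <;> norm_num

lemma key (η : ℤ → ℤ → ℝ) (hrec : SquiralRec η) (h0 : η 0 0 = 1)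
    (hsym : ∀ m n : ℤ, η (-m) n = η m n ∧ η m (-n) = η m n ∧ η m n = η n m)
    (hsign : ∀ m n : ℤ, 0 < (-1 : ℝ) ^ (m + n) * η m n) :
    ∀ N : ℕ, ∀ m n : ℤ, 0 ≤ m → 0 ≤ n → m + n ≤ (N : ℤ) → A η m n ≤ A η m 0 := by
  intro N
  induction N using Nat.strong_induction_on with
  | _ N ih =>
  intro m n hm hn hmn
  rcases eq_or_lt_of_le hn with hn1 | hn1
  · rw [← hn1]
  by_cases hb1 : m = 0 ∧ n = 1
  · obtain ⟨rfl, rfl⟩ := hb1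
    have h2 := (Arec η hrec 0 0).2.1
    norm_num at h2
    have hA0 : A η 0 0 = 1 := by simp [A, h0]
    linarith
  by_cases hb2 : m = 1 ∧ n = 1
  · obtain ⟨rfl, rfl⟩ := hb2
    have h5 := (Arec η hrec 0 0).2.2.2.2.1
    norm_num at h5
    have hs := Aswap η hsym 0 1
    have hp := Apos η hsign 1 0
    linarith
  obtain ⟨q, r, hr0, hr3, rfl⟩ : ∃ q r : ℤ, 0 ≤ r ∧ r < 3 ∧ m = 3*q + r :=
    ⟨m / 3, m % 3, Int.emod_nonneg m (by norm_num), Int.emod_lt_of_pos m (by norm_num), by omega⟩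
  obtain ⟨p, s, hs0, hs3, rfl⟩ : ∃ p s : ℤ, 0 ≤ s ∧ s < 3 ∧ n = 3*p + s :=
    ⟨n / 3, n % 3, Int.emod_nonneg n (by norm_num), Int.emod_lt_of_pos n (by norm_num), by omega⟩
  have R := Arec η hrec q p
  have R01 := (Arec η hrec q 0).1
  have R02 := (Arec η hrec q 0).2.2.2.1
  have R03 := (Arec η hrec q 0).2.2.2.2.2.2.1
  norm_num at R01 R02 R03
  have hp1 := Apos η hsign q 0
  have hp2 := Apos η hsign (q+1) 0
  interval_cases r <;> interval_cases s
  · -- (0,0)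
    simp only [add_zero]
    rw [R.1, R01]
    exact ih (N-1) (by omega) q p (by omega) (by omega) (by omega)
  · -- (0,1)
    simp only [add_zero]
    have i1 := ih (N-1) (by omega) q p (by omega) (by omega) (by omega)
    have i2 := ih (N-1) (by omega) q (p+1) (by omega) (by omega) (by omega)
    rw [R.2.1, R01]
    linarith
  · -- (0,2)
    simp only [add_zero]
    have i1 := ih (N-1) (by omega) q p (by omega) (by omega) (by omega)
    have i2 := ih (N-1) (by omega) q (p+1) (by omega) (by omega) (by omega)
    rw [R.2.2.1, R01]
    linarith
  · -- (1,0)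
    simp only [add_zero]
    have i1 := ih (N-1) (by omega) q p (by omega) (by omega) (by omega)
    have i2 := ih (N-1) (by omega) (q+1) p (by omega) (by omega) (by omega)
    rw [R.2.2.2.1, R02]
    linarith
  · -- (1,1)
    have i1 := ih (N-1) (by omega) (q+1) p (by omega) (by omega) (by omega)
    have i2 := ih (N-1) (by omega) q (p+1) (by omega) (by omega) (by omega)
    have i3 := ih (N-1) (by omega) (q+1) (p+1) (by omega) (by omega) (by omega)
    have i4 := ih (N-1) (by omega) q p (by omega) (by omega) (by omega)
    rw [R.2.2.2.2.1, R02]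
    linarith
  · -- (1,2)
    have i1 := ih (N-1) (by omega) q p (by omega) (by omega) (by omega)
    have i2 := ih (N-1) (by omega) (q+1) (p+1) (by omega) (by omega) (by omega)
    have i3 := ih (N-1) (by omega) (q+1) p (by omega) (by omega) (by omega)
    rw [R.2.2.2.2.2.1, R02]
    linarith
  · -- (2,0)
    simp only [add_zero]
    have i1 := ih (N-1) (by omega) q p (by omega) (by omega) (by omega)
    have i2 := ih (N-1) (by omega) (q+1) p (by omega) (by omega) (by omega)
    rw [R.2.2.2.2.2.2.1, R03]
    linarith
  · -- (2,1)
    have i1 := ih (N-1) (by omega) q p (by omega) (by omega) (by omega)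
    have i2 := ih (N-1) (by omega) (q+1) (p+1) (by omega) (by omega) (by omega)
    have i3 := ih (N-1) (by omega) q (p+1) (by omega) (by omega) (by omega)
    rw [R.2.2.2.2.2.2.2.1, R03]
    linarith
  · -- (2,2)
    have i1 := ih (N-1) (by omega) q p (by omega) (by omega) (by omega)
    have i2 := ih (N-1) (by omega) (q+1) p (by omega) (by omega) (by omega)
    have i3 := ih (N-1) (by omega) q (p+1) (by omega) (by omega) (by omega)
    rw [R.2.2.2.2.2.2.2.2, R03]
    linarith

end SquiralProof

theorem squiral_row_dominance (η : ℤ → ℤ → ℝ)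
    (hrec : SquiralRec η) (h0 : η 0 0 = 1)
    (hsym : ∀ m n : ℤ, η (-m) n = η m n ∧ η m (-n) = η m n ∧ η m n = η n m)
    (hsign : ∀ m n : ℤ, 0 < (-1 : ℝ) ^ (m + n) * η m n) :
    ∀ m n : ℤ, 0 ≤ η m 0 ^ 2 - η m n ^ 2 := by
  intro m n
  have h1 : SquiralProof.A η m n ≤ SquiralProof.A η m 0 := by
    have hk := SquiralProof.key η hrec h0 hsym hsign (|m| + |n|).toNat |m| |n|
      (abs_nonneg m) (abs_nonneg n) (by omega)
    have e0 := SquiralProof.Aabs η hsym m 0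
    rw [abs_zero] at e0
    calc SquiralProof.A η m n = SquiralProof.A η |m| |n| := (SquiralProof.Aabs η hsym m n).symm
      _ ≤ SquiralProof.A η |m| 0 := hk
      _ = SquiralProof.A η m 0 := e0
  have p1 : 0 < SquiralProof.A η m n := SquiralProof.Apos η hsign m n
  have hsq : SquiralProof.A η m n ^ 2 ≤ SquiralProof.A η m 0 ^ 2 :=
    pow_le_pow_left₀ p1.le h1 2
  have s1 := SquiralProof.Asq η m n
  have s2 := SquiralProof.Asq η m 0
  linarith
end

section
/- Let ε: ℤ → ℝ satisfy ε(0)=1 and the recursions ε(3m)=ε(m), ε(3m+1)=-(2/9)ε(m)+(1/3)ε(m+1), ε(3m+2)=(1/3)ε(m)-(2/9)ε(m+1) for all m ∈ ℤ. Define Σ₁(N)=∑_{m=0}^{N-1} ε(m)². Then Σ₁(3N) ≤ (133/81)·Σ₁(N) for all N ≥ 1. -/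
theorem squiral_1d_sum_estimate (ε : ℤ → ℝ) (h0 : ε 0 = 1)
    (hrec : ∀ m : ℤ,
      ε (3*m) = ε m ∧
      ε (3*m+1) = -(2/9) * ε m + (1/3) * ε (m+1) ∧
      ε (3*m+2) = (1/3) * ε m - (2/9) * ε (m+1)) :
    ∀ N : ℕ, 1 ≤ N →
      (∑ m ∈ Finset.range (3*N), ε m ^ 2) ≤ (133/81) * ∑ m ∈ Finset.range N, ε m ^ 2 := by
  -- ε 1 = -1/3
  have hε1 : ε 1 = -1/3 := by
    have h := (hrec 0).2.1
    norm_num [h0] at h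
    linarith
  -- |ε n| ≤ 1 for all n : ℕ, by strong induction
  have habs : ∀ n : ℕ, |ε (n : ℤ)| ≤ 1 := by
    intro n
    induction n using Nat.strong_induction_on with
    | _ n ih =>
      rcases Nat.lt_or_ge n 2 with h2 | h2
      · interval_cases n
        · simp [h0]
        · rw [show ((1:ℕ):ℤ) = 1 by norm_num, hε1, abs_div, abs_neg]; norm_num
      · set k := n / 3 with hk
        have hklt : k < n := by omega
        have hk1lt : k + 1 < n := by omega
        have ha := ih k hklt
        have hb := ih (k + 1) hk1lt
        have hcast : ((k + 1 : ℕ) : ℤ) = (k : ℤ) + 1 := by push_cast; ring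
        rw [hcast] at hb
        have hr3 : n % 3 = 0 ∨ n % 3 = 1 ∨ n % 3 = 2 := by omega
        rcases hr3 with hr | hr | hr
        · have hc : (n : ℤ) = 3 * (k : ℤ) := by omega
          rw [hc, (hrec k).1]; exact ha
        · have hc : (n : ℤ) = 3 * (k : ℤ) + 1 := by omega
          rw [hc, (hrec k).2.1]
          rw [abs_le] at ha hb ⊢
          constructor <;> [nlinarith; nlinarith]
        · have hc : (n : ℤ) = 3 * (k : ℤ) + 2 := by omega
          rw [hc, (hrec k).2.2]
          rw [abs_le] at ha hb ⊢
          constructor <;> [nlinarith; nlinarith]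
  -- split sum into triples
  have key : ∀ N : ℕ, (∑ m ∈ Finset.range (3*N), ε m ^ 2)
      = ∑ k ∈ Finset.range N,
        (ε (3*(k:ℤ)) ^ 2 + ε (3*(k:ℤ)+1) ^ 2 + ε (3*(k:ℤ)+2) ^ 2) := by
    intro N
    induction N with
    | zero => simp
    | succ n ihn =>
      have h3 : 3 * (n + 1) = 3 * n + 1 + 1 + 1 := by ring
      rw [h3, Finset.sum_range_succ, Finset.sum_range_succ, Finset.sum_range_succ, ihn,
        Finset.sum_range_succ]
      push_cast
      ring
  -- pointwise triple bound
  have tri : ∀ k : ℤ, ε (3*k) ^ 2 + ε (3*k+1) ^ 2 + ε (3*k+2) ^ 2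
      ≤ (107/81) * ε k ^ 2 + (26/81) * ε (k+1) ^ 2 := by
    intro k
    obtain ⟨h1, h2, h3⟩ := hrec k
    rw [h1, h2, h3]
    nlinarith [sq_nonneg (ε k + ε (k+1)), sq_nonneg (ε k - ε (k+1))]
  -- shifted sum identity
  have shift : ∀ N : ℕ, (∑ k ∈ Finset.range N, ε ((k:ℤ)+1) ^ 2)
      = (∑ k ∈ Finset.range N, ε k ^ 2) - 1 + ε (N:ℤ) ^ 2 := by
    intro N
    induction N with
    | zero => simp [h0]
    | succ n ihn =>
      rw [Finset.sum_range_succ, Finset.sum_range_succ, ihn]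
      push_cast
      ring
  intro N hN
  have hsq : ε (N:ℤ) ^ 2 ≤ 1 := by
    have h := habs N
    nlinarith [sq_abs (ε (N:ℤ)), abs_nonneg (ε (N:ℤ))]
  have step : (∑ m ∈ Finset.range (3*N), ε m ^ 2)
      ≤ ∑ k ∈ Finset.range N, ((107/81) * ε k ^ 2 + (26/81) * ε ((k:ℤ)+1) ^ 2) := by
    rw [key N]
    exact Finset.sum_le_sum fun k _ => tri (k : ℤ)
  rw [Finset.sum_add_distrib, ← Finset.mul_sum, ← Finset.mul_sum, shift N] at step
  linarith
end

section
/- Let ε: ℤ → ℝ satisfy ε(0)=1, |ε(m)| ≤ 1 for all m, and Σ₁(3N) ≤ (133/81)·Σ₁(N) where Σ₁(N)=∑_{m=0}^{N-1} ε(m)². Then Σ₁(N) = O(N^α) with α = log₃(133/81) < 1/2; in particular Σ₁(N)/N → 0 as N → ∞. -/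
open Filter

theorem squiral_1d_growth (ε : ℤ → ℝ) (h0 : ε 0 = 1)
    (hb : ∀ m : ℤ, |ε m| ≤ 1)
    (hS : ∀ N : ℕ, 1 ≤ N →
      (∑ m ∈ Finset.range (3*N), ε m ^ 2) ≤ (133/81) * ∑ m ∈ Finset.range N, ε m ^ 2) :
    Real.logb 3 (133/81) < 1/2 ∧
    (∃ C > 0, ∀ N : ℕ, 1 ≤ N →
      (∑ m ∈ Finset.range N, ε m ^ 2) ≤ C * (N : ℝ) ^ Real.logb 3 (133/81)) ∧
    Tendsto (fun N : ℕ => (∑ m ∈ Finset.range N, ε m ^ 2) / N) atTop (nhds 0) := by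
  set α := Real.logb 3 (133/81) with hα
  have hα_pos : 0 < α := Real.logb_pos (by norm_num) (by norm_num)
  have hα_lt : α < 1/2 := by
    rw [hα, Real.logb_lt_iff_lt_rpow (by norm_num) (by norm_num),
      ← Real.sqrt_eq_rpow]
    rw [show (133:ℝ)/81 = Real.sqrt ((133/81)^2) by
      rw [Real.sqrt_sq (by norm_num)]]
    exact Real.sqrt_lt_sqrt (by positivity) (by norm_num)
  have h3α : (3:ℝ) ^ α = 133/81 := Real.rpow_logb (by norm_num) (by norm_num) (by norm_num)
  have mono : ∀ M N : ℕ, M ≤ N →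
      (∑ m ∈ Finset.range M, ε m ^ 2) ≤ ∑ m ∈ Finset.range N, ε m ^ 2 := by
    intro M N hMN
    apply Finset.sum_le_sum_of_subset_of_nonneg (Finset.range_subset_range.mpr hMN)
    intro i _ _; positivity
  have key : ∀ k : ℕ, (∑ m ∈ Finset.range (3^k), ε m ^ 2) ≤ (133/81)^k := by
    intro k
    induction k with
    | zero => simp [h0]
    | succ k ih =>
      have h1 := hS (3^k) (Nat.one_le_pow _ _ (by norm_num))
      calc (∑ m ∈ Finset.range (3^(k+1)), ε m ^ 2)
          = ∑ m ∈ Finset.range (3*3^k), ε m ^ 2 := by rw [pow_succ, mul_comm]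
        _ ≤ (133/81) * ∑ m ∈ Finset.range (3^k), ε m ^ 2 := h1
        _ ≤ (133/81) * (133/81)^k := by nlinarith
        _ = (133/81)^(k+1) := by ring
  have bound : ∀ N : ℕ, 1 ≤ N →
      (∑ m ∈ Finset.range N, ε m ^ 2) ≤ (133/81) * (N:ℝ) ^ α := by
    intro N hN
    set k := Nat.log 3 N with hk
    have h3k : 3^k ≤ N := Nat.pow_log_le_self 3 (by omega)
    have h2 : ((133:ℝ)/81)^k ≤ (N:ℝ)^α := by
      calc ((133:ℝ)/81)^k = ((3:ℝ)^α)^k := by rw [h3α]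
        _ = ((3:ℝ)^(k:ℕ))^α := by
            rw [← Real.rpow_natCast ((3:ℝ)^α) k, ← Real.rpow_mul (by norm_num),
              mul_comm, Real.rpow_mul (by norm_num), Real.rpow_natCast]
        _ ≤ (N:ℝ)^α := by
            apply Real.rpow_le_rpow (by positivity) _ hα_pos.le
            exact_mod_cast h3k
    calc (∑ m ∈ Finset.range N, ε m ^ 2)
        ≤ ∑ m ∈ Finset.range (3^(k+1)), ε m ^ 2 :=
          mono _ _ (Nat.lt_pow_succ_log_self (by norm_num) N).le
      _ ≤ (133/81)^(k+1) := key (k+1)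
      _ = (133/81) * (133/81)^k := by ring
      _ ≤ (133/81) * (N:ℝ)^α := by nlinarith
  refine ⟨hα_lt, ⟨133/81, by norm_num, bound⟩, ?_⟩
  have hup : Tendsto (fun N : ℕ => (133/81) * (N:ℝ) ^ (α - 1)) atTop (nhds 0) := by
    have h1 : Tendsto (fun x : ℝ => x ^ (-(1 - α))) atTop (nhds 0) :=
      tendsto_rpow_neg_atTop (by linarith)
    have h2 := h1.comp tendsto_natCast_atTop_atTop (α := ℕ)
    have h3 : Tendsto (fun N : ℕ => (N:ℝ) ^ (α - 1)) atTop (nhds 0) := by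
      convert h2 using 2 with N
      simp only [Function.comp]
      ring_nf
    simpa using h3.const_mul (133/81 : ℝ)
  apply squeeze_zero' (Eventually.of_forall fun N => by positivity)
  · filter_upwards [eventually_ge_atTop 1] with N hN
    have hb := bound N hN
    have hNpos : (0:ℝ) < N := by exact_mod_cast hN
    rw [div_le_iff₀ hNpos]
    calc (∑ m ∈ Finset.range N, ε m ^ 2) ≤ (133/81) * (N:ℝ) ^ α := hb
      _ = 133/81 * (N:ℝ) ^ (α - 1) * N := by
          rw [Real.rpow_sub hNpos, Real.rpow_one]
          field_simp
  · exact hup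
end

section
/- Let η: ℤ² → ℝ be the squiral autocorrelation coefficients (satisfying the recursion relations, η(0,0)=1, and the inequality η(m,0)² ≥ η(m,n)² for all m,n). Define Σ(N) = ∑_{m,n=0}^{N-1} η(m,n)². Then Σ(3N) ≤ (319/81)·Σ(N) < 4·Σ(N) for all N ≥ 1. -/
lemma squiral_sym (η : ℤ → ℤ → ℝ) (hrec : SquiralRec η) (h0 : η 0 0 = 1) :
    ∀ M N : ℕ, η M N = η N M := by
  -- base facts
  have e10 : η 1 0 = -(1/3) := by
    have h := (hrec 0 0).2.2.2.1
    norm_num [h0] at h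
    linarith
  have e01 : η 0 1 = -(1/3) := by
    have h := (hrec 0 0).2.1
    norm_num [h0] at h
    linarith
  have e20 : η 2 0 = η 0 2 := by
    have h1 := (hrec 0 0).2.2.2.2.2.2.1
    have h2 := (hrec 0 0).2.2.1
    norm_num [h0, e10, e01] at h1 h2
    rw [h1, h2]
  have e21 : η 2 1 = η 1 2 := by
    have h1 := (hrec 0 0).2.2.2.2.2.2.2.1
    have h2 := (hrec 0 0).2.2.2.2.2.1
    norm_num [h0, e10, e01] at h1 h2
    rw [h1, h2]
  suffices H : ∀ K M N : ℕ, M + N ≤ K → η M N = η N M by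
    exact fun M N => H (M + N) M N le_rfl
  intro K
  induction K with
  | zero =>
    intro M N h
    obtain ⟨rfl, rfl⟩ : M = 0 ∧ N = 0 := by omega
    rfl
  | succ K ih =>
    intro M N hMN
    by_cases hb : M ≤ 2 ∧ N ≤ 2
    · obtain ⟨hM, hN⟩ := hb
      interval_cases M <;> interval_cases N <;>
        push_cast <;>
        first
          | rfl
          | (rw [e10, e01])
          | (rw [e01, e10])
          | exact e20
          | exact e20.symm
          | exact e21
          | exact e21.symm
    · obtain ⟨m, a, ha, rfl⟩ : ∃ m a, a < 3 ∧ M = 3*m+a := ⟨M/3, M%3, by omega, by omega⟩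
      obtain ⟨n, b, hbb, rfl⟩ : ∃ n b, b < 3 ∧ N = 3*n+b := ⟨N/3, N%3, by omega, by omega⟩
      have hmn : 1 ≤ m + n := by omega
      have R1 := hrec (m : ℤ) (n : ℤ)
      have R2 := hrec (n : ℤ) (m : ℤ)
      have i00 : η m n = η n m := ih m n (by omega)
      interval_cases a <;> interval_cases b <;> push_cast <;> (try simp only [add_zero])
      · rw [R1.1, R2.1, i00]
      · have i01 : η m (n+1) = η (n+1) m := by
          have := ih m (n+1) (by omega); push_cast at this; exact this
        rw [R1.2.1, R2.2.2.2.1, i00, i01]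
      · have i01 : η m (n+1) = η (n+1) m := by
          have := ih m (n+1) (by omega); push_cast at this; exact this
        rw [R1.2.2.1, R2.2.2.2.2.2.2.1, i00, i01]
      · have i10 : η (m+1) n = η n (m+1) := by
          have := ih (m+1) n (by omega); push_cast at this; exact this
        rw [R1.2.2.2.1, R2.2.1, i00, i10]
      · have i10 : η (m+1) n = η n (m+1) := by
          have := ih (m+1) n (by omega); push_cast at this; exact this
        have i01 : η m (n+1) = η (n+1) m := by
          have := ih m (n+1) (by omega); push_cast at this; exact this
        have i11 : η (m+1) (n+1) = η (n+1) (m+1) := by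
          have := ih (m+1) (n+1) (by omega); push_cast at this; exact this
        rw [R1.2.2.2.2.1, R2.2.2.2.2.1, i10, i01, i11]
        ring
      · have i10 : η (m+1) n = η n (m+1) := by
          have := ih (m+1) n (by omega); push_cast at this; exact this
        have i11 : η (m+1) (n+1) = η (n+1) (m+1) := by
          have := ih (m+1) (n+1) (by omega); push_cast at this; exact this
        rw [R1.2.2.2.2.2.1, R2.2.2.2.2.2.2.2.1, i00, i10, i11]
      · have i10 : η (m+1) n = η n (m+1) := by
          have := ih (m+1) n (by omega); push_cast at this; exact this
        rw [R1.2.2.2.2.2.2.1, R2.2.2.1, i00, i10]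
      · have i01 : η m (n+1) = η (n+1) m := by
          have := ih m (n+1) (by omega); push_cast at this; exact this
        have i11 : η (m+1) (n+1) = η (n+1) (m+1) := by
          have := ih (m+1) (n+1) (by omega); push_cast at this; exact this
        rw [R1.2.2.2.2.2.2.2.1, R2.2.2.2.2.2.1, i00, i01, i11]
      · have i10 : η (m+1) n = η n (m+1) := by
          have := ih (m+1) n (by omega); push_cast at this; exact this
        have i01 : η m (n+1) = η (n+1) m := by
          have := ih m (n+1) (by omega); push_cast at this; exact this
        rw [R1.2.2.2.2.2.2.2.2, R2.2.2.2.2.2.2.2.2, i00, i10, i01]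
        ring

lemma sum_range_three (f : ℕ → ℝ) (N : ℕ) :
    ∑ k ∈ Finset.range (3*N), f k
      = ∑ m ∈ Finset.range N, (f (3*m) + f (3*m+1) + f (3*m+2)) := by
  induction N with
  | zero => simp
  | succ N ih =>
    rw [Finset.sum_range_succ, ← ih, show 3*(N+1) = 3*N+1+1+1 by ring,
      Finset.sum_range_succ, Finset.sum_range_succ, Finset.sum_range_succ]
    ring_nf

lemma row_shift (η : ℤ → ℤ → ℝ) (hineq : ∀ m n : ℤ, η m n ^ 2 ≤ η m 0 ^ 2)
    (M : ℤ) (N : ℕ) :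
    ∑ n ∈ Finset.range N, η M ((n : ℤ)+1) ^ 2 ≤ ∑ n ∈ Finset.range N, η M n ^ 2 := by
  have h1 := Finset.sum_range_succ' (fun n : ℕ => η M n ^ 2) N
  have h2 := Finset.sum_range_succ (fun n : ℕ => η M n ^ 2) N
  have h3 : ∑ n ∈ Finset.range N, η M ((n : ℤ)+1) ^ 2
      = ∑ n ∈ Finset.range N, (fun n : ℕ => η M n ^ 2) (n+1) := by
    apply Finset.sum_congr rfl
    intro x _
    push_cast
    ring_nf
  have h4 := hineq M N
  have h5 : ((0:ℕ):ℤ) = 0 := by norm_num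
  rw [h3]
  simp only [h5] at h1
  linarith

set_option maxHeartbeats 1000000 in
lemma nine_bound (η : ℤ → ℤ → ℝ) (hrec : SquiralRec η) (m n : ℤ) :
    η (3*m) (3*n) ^ 2 + η (3*m) (3*n+1) ^ 2 + η (3*m) (3*n+2) ^ 2
    + η (3*m+1) (3*n) ^ 2 + η (3*m+1) (3*n+1) ^ 2 + η (3*m+1) (3*n+2) ^ 2
    + η (3*m+2) (3*n) ^ 2 + η (3*m+2) (3*n+1) ^ 2 + η (3*m+2) (3*n+2) ^ 2
    ≤ (160/81) * η m n ^ 2 + (53/81) * η (m+1) n ^ 2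
      + (53/81) * η m (n+1) ^ 2 + (27/81) * η (m+1) (n+1) ^ 2 := by
  obtain ⟨h1, h2, h3, h4, h5, h6, h7, h8, h9⟩ := hrec m n
  rw [h1, h2, h3, h4, h5, h6, h7, h8, h9]
  set A := η m n
  set B := η (m+1) n
  set C := η m (n+1)
  set D := η (m+1) (n+1)
  have b2 : (-(2/9) * A + (1/3) * C)^2 ≤ 8/81*A^2 + 2/9*C^2 := by
    nlinarith [sq_nonneg (2*A+3*C)]
  have b3 : ((1/3) * A - (2/9) * C)^2 ≤ 2/9*A^2 + 8/81*C^2 := by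
    nlinarith [sq_nonneg (3*A+2*C)]
  have b4 : (-(2/9) * A + (1/3) * B)^2 ≤ 8/81*A^2 + 2/9*B^2 := by
    nlinarith [sq_nonneg (2*A+3*B)]
  have b7 : ((1/3) * A - (2/9) * B)^2 ≤ 2/9*A^2 + 8/81*B^2 := by
    nlinarith [sq_nonneg (3*A+2*B)]
  have b5 : (-(2/9) * (B + C) + (1/9) * D)^2 ≤ 12/81*B^2 + 12/81*C^2 + 3/81*D^2 := by
    nlinarith [sq_nonneg (B-C), sq_nonneg (2*C+D), sq_nonneg (2*B+D)]
  have b6 : (-(2/9) * (A + D) + (1/9) * B)^2 ≤ 12/81*A^2 + 12/81*D^2 + 3/81*B^2 := by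
    nlinarith [sq_nonneg (A-D), sq_nonneg (2*D+B), sq_nonneg (2*A+B)]
  have b8 : (-(2/9) * (A + D) + (1/9) * C)^2 ≤ 12/81*A^2 + 12/81*D^2 + 3/81*C^2 := by
    nlinarith [sq_nonneg (A-D), sq_nonneg (2*D+C), sq_nonneg (2*A+C)]
  have b9 : ((1/9) * A - (2/9) * (B + C))^2 ≤ 3/81*A^2 + 12/81*B^2 + 12/81*C^2 := by
    nlinarith [sq_nonneg (B-C), sq_nonneg (A+2*B), sq_nonneg (A+2*C)]
  linarith

lemma sum_range_three2 (f : ℕ → ℕ → ℝ) (N : ℕ) :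
    ∑ k ∈ Finset.range (3*N), ∑ l ∈ Finset.range (3*N), f k l
      = ∑ m ∈ Finset.range N, ∑ n ∈ Finset.range N,
          (f (3*m) (3*n) + f (3*m) (3*n+1) + f (3*m) (3*n+2)
          + f (3*m+1) (3*n) + f (3*m+1) (3*n+1) + f (3*m+1) (3*n+2)
          + f (3*m+2) (3*n) + f (3*m+2) (3*n+1) + f (3*m+2) (3*n+2)) := by
  rw [sum_range_three (fun k => ∑ l ∈ Finset.range (3*N), f k l)]
  apply Finset.sum_congr rfl
  intro m _
  rw [sum_range_three (fun l => f (3*m) l), sum_range_three (fun l => f (3*m+1) l),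
    sum_range_three (fun l => f (3*m+2) l), ← Finset.sum_add_distrib,
    ← Finset.sum_add_distrib]
  apply Finset.sum_congr rfl
  intro n _
  ring

theorem squiral_2d_sum_estimate (η : ℤ → ℤ → ℝ)
    (hrec : SquiralRec η) (h0 : η 0 0 = 1)
    (hineq : ∀ m n : ℤ, η m n ^ 2 ≤ η m 0 ^ 2) :
    ∀ N : ℕ, 1 ≤ N →
      (∑ m ∈ Finset.range (3*N), ∑ n ∈ Finset.range (3*N), η m n ^ 2) ≤
        (319/81) * (∑ m ∈ Finset.range N, ∑ n ∈ Finset.range N, η m n ^ 2) ∧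
      (319/81) * (∑ m ∈ Finset.range N, ∑ n ∈ Finset.range N, η m n ^ 2) <
        4 * (∑ m ∈ Finset.range N, ∑ n ∈ Finset.range N, η m n ^ 2) := by
  intro N hN
  set S := ∑ m ∈ Finset.range N, ∑ n ∈ Finset.range N, η m n ^ 2 with hSdef
  -- S ≥ 1
  have hS1 : (1:ℝ) ≤ S := by
    have h00 : (1:ℝ) ≤ ∑ n ∈ Finset.range N, η ((0:ℕ):ℤ) n ^ 2 := by
      have := Finset.single_le_sum (f := fun n : ℕ => η ((0:ℕ):ℤ) n ^ 2)
        (fun n _ => sq_nonneg _) (Finset.mem_range.mpr (by omega : 0 < N))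
      simp only [Nat.cast_zero] at this ⊢
      rw [h0] at this
      norm_num at this
      linarith
    have h1 := Finset.single_le_sum (f := fun m : ℕ => ∑ n ∈ Finset.range N, η m n ^ 2)
      (fun m _ => Finset.sum_nonneg fun n _ => sq_nonneg _)
      (Finset.mem_range.mpr (by omega : 0 < N))
    exact le_trans h00 h1
  -- shifted sums
  have hSC : ∑ m ∈ Finset.range N, ∑ n ∈ Finset.range N, η m ((n:ℤ)+1) ^ 2 ≤ S :=
    Finset.sum_le_sum fun m _ => row_shift η hineq m N
  have hSB : ∑ m ∈ Finset.range N, ∑ n ∈ Finset.range N, η ((m:ℤ)+1) n ^ 2 ≤ S := by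
    have hsym : ∀ m n : ℕ, η ((m:ℤ)+1) n = η (n:ℤ) ((m:ℤ)+1) := by
      intro m n
      have := squiral_sym η hrec h0 (m+1) n
      push_cast at this
      exact this
    calc ∑ m ∈ Finset.range N, ∑ n ∈ Finset.range N, η ((m:ℤ)+1) n ^ 2
        = ∑ m ∈ Finset.range N, ∑ n ∈ Finset.range N, η (n:ℤ) ((m:ℤ)+1) ^ 2 := by
          apply Finset.sum_congr rfl; intro m _
          apply Finset.sum_congr rfl; intro n _
          rw [hsym]
      _ = ∑ n ∈ Finset.range N, ∑ m ∈ Finset.range N, η (n:ℤ) ((m:ℤ)+1) ^ 2 :=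
          Finset.sum_comm
      _ ≤ ∑ n ∈ Finset.range N, ∑ m ∈ Finset.range N, η (n:ℤ) (m:ℤ) ^ 2 :=
          Finset.sum_le_sum fun n _ => row_shift η hineq n N
      _ = S := rfl
  have hSD : ∑ m ∈ Finset.range N, ∑ n ∈ Finset.range N, η ((m:ℤ)+1) ((n:ℤ)+1) ^ 2 ≤ S := by
    calc ∑ m ∈ Finset.range N, ∑ n ∈ Finset.range N, η ((m:ℤ)+1) ((n:ℤ)+1) ^ 2
        ≤ ∑ m ∈ Finset.range N, ∑ n ∈ Finset.range N, η ((m:ℤ)+1) (n:ℤ) ^ 2 :=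
          Finset.sum_le_sum fun m _ => row_shift η hineq ((m:ℤ)+1) N
      _ ≤ S := hSB
  -- main bound
  have key : (∑ m ∈ Finset.range (3*N), ∑ n ∈ Finset.range (3*N), η m n ^ 2)
      ≤ (293/81) * S := by
    rw [sum_range_three2 (fun k l => η k l ^ 2)]
    have hpt : ∀ m ∈ Finset.range N, ∀ n ∈ Finset.range N,
        (fun k l : ℕ => η k l ^ 2) (3*m) (3*n) + (fun k l : ℕ => η k l ^ 2) (3*m) (3*n+1)
        + (fun k l : ℕ => η k l ^ 2) (3*m) (3*n+2)
        + (fun k l : ℕ => η k l ^ 2) (3*m+1) (3*n) + (fun k l : ℕ => η k l ^ 2) (3*m+1) (3*n+1)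
        + (fun k l : ℕ => η k l ^ 2) (3*m+1) (3*n+2)
        + (fun k l : ℕ => η k l ^ 2) (3*m+2) (3*n) + (fun k l : ℕ => η k l ^ 2) (3*m+2) (3*n+1)
        + (fun k l : ℕ => η k l ^ 2) (3*m+2) (3*n+2)
        ≤ (160/81) * η m n ^ 2 + (53/81) * η ((m:ℤ)+1) n ^ 2
          + (53/81) * η m ((n:ℤ)+1) ^ 2 + (27/81) * η ((m:ℤ)+1) ((n:ℤ)+1) ^ 2 := by
      intro m _ n _
      have := nine_bound η hrec m n
      simp only
      push_cast
      convert this using 2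
    calc ∑ m ∈ Finset.range N, ∑ n ∈ Finset.range N,
          ((fun k l : ℕ => η k l ^ 2) (3*m) (3*n) + (fun k l : ℕ => η k l ^ 2) (3*m) (3*n+1)
          + (fun k l : ℕ => η k l ^ 2) (3*m) (3*n+2)
          + (fun k l : ℕ => η k l ^ 2) (3*m+1) (3*n) + (fun k l : ℕ => η k l ^ 2) (3*m+1) (3*n+1)
          + (fun k l : ℕ => η k l ^ 2) (3*m+1) (3*n+2)
          + (fun k l : ℕ => η k l ^ 2) (3*m+2) (3*n) + (fun k l : ℕ => η k l ^ 2) (3*m+2) (3*n+1)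
          + (fun k l : ℕ => η k l ^ 2) (3*m+2) (3*n+2))
        ≤ ∑ m ∈ Finset.range N, ∑ n ∈ Finset.range N,
            ((160/81) * η m n ^ 2 + (53/81) * η ((m:ℤ)+1) n ^ 2
            + (53/81) * η m ((n:ℤ)+1) ^ 2 + (27/81) * η ((m:ℤ)+1) ((n:ℤ)+1) ^ 2) := by
          apply Finset.sum_le_sum
          intro m hm
          exact Finset.sum_le_sum fun n hn => hpt m hm n hn
      _ = (160/81) * S
          + (53/81) * (∑ m ∈ Finset.range N, ∑ n ∈ Finset.range N, η ((m:ℤ)+1) n ^ 2)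
          + (53/81) * (∑ m ∈ Finset.range N, ∑ n ∈ Finset.range N, η m ((n:ℤ)+1) ^ 2)
          + (27/81) * (∑ m ∈ Finset.range N, ∑ n ∈ Finset.range N, η ((m:ℤ)+1) ((n:ℤ)+1) ^ 2) := by
          simp only [Finset.sum_add_distrib, Finset.mul_sum, hSdef]
      _ ≤ (293/81) * S := by linarith
  constructor
  · linarith
  · linarith
end

section
/- For α ∈ (0,1), the function ζ(m,n) = α + (1-α)·(-1)^{m+n} on ℤ² is positive definite (it is the Fourier transform of the measure α·δ_{(0,0)} + (1-α)·δ_{(1/2,1/2)} on the 2-torus) and has full D₄ symmetry, but it violates the inequality ζ(m,0)² ≥ ζ(m,n)², i.e. there exist m,n ∈ ℤ with ζ(m,0)² < ζ(m,n)². -/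
open Complex

theorem counterexample_positive_definite_without_row_dominance
    (α : ℝ) (hα : α ∈ Set.Ioo (0:ℝ) 1) (ζ : ℤ → ℤ → ℝ)
    (hζ : ∀ m n : ℤ, ζ m n = α + (1 - α) * (-1 : ℝ) ^ (m + n)) :
    (∀ (N : ℕ) (z : Fin N → ℤ × ℤ) (c : Fin N → ℂ),
        0 ≤ (∑ i, ∑ j, c i * star (c j) *
          (ζ ((z i).1 - (z j).1) ((z i).2 - (z j).2) : ℂ)).re ∧
        (∑ i, ∑ j, c i * star (c j) *
          (ζ ((z i).1 - (z j).1) ((z i).2 - (z j).2) : ℂ)).im = 0) ∧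
    (∀ m n : ℤ, ζ (-m) n = ζ m n ∧ ζ m (-n) = ζ m n ∧ ζ m n = ζ n m) ∧
    (∃ m n : ℤ, ζ m 0 ^ 2 < ζ m n ^ 2) := by
  obtain ⟨hα0, hα1⟩ := hα
  have hsq : ∀ k : ℤ, (-1:ℝ) ^ k * (-1:ℝ) ^ k = 1 := by
    intro k; rw [← mul_zpow]; norm_num
  have hinv : ∀ k : ℤ, ((-1:ℝ) ^ k)⁻¹ = (-1:ℝ) ^ k := by
    intro k
    exact inv_eq_of_mul_eq_one_right (hsq k)
  have hpow : ∀ a b : ℤ, (-1:ℝ) ^ (a - b) = (-1:ℝ) ^ a * (-1:ℝ) ^ b := by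
    intro a b
    rw [zpow_sub₀ (by norm_num : (-1:ℝ) ≠ 0), div_eq_mul_inv, hinv]
  refine ⟨?_, ?_, ?_⟩
  · intro N z c
    set ε : Fin N → ℂ := fun i => (((-1:ℝ) ^ ((z i).1 + (z i).2) : ℝ) : ℂ) with hε
    set s : ℂ := ∑ i, c i with hs
    set t : ℂ := ∑ i, c i * ε i with ht
    have expand : ∀ i j, ((ζ ((z i).1 - (z j).1) ((z i).2 - (z j).2) : ℝ) : ℂ)
        = (α : ℂ) + ((1 - α : ℝ) : ℂ) * (ε i * ε j) := by
      intro i j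
      rw [hζ]
      have h2 : ((z i).1 - (z j).1) + ((z i).2 - (z j).2)
          = ((z i).1 + (z i).2) - ((z j).1 + (z j).2) := by ring
      rw [h2, hpow]
      simp only [hε]
      push_cast
      ring
    have key : (∑ i, ∑ j, c i * star (c j) *
          (ζ ((z i).1 - (z j).1) ((z i).2 - (z j).2) : ℂ))
        = (α : ℂ) * (s * star s) + ((1 - α : ℝ) : ℂ) * (t * star t) := by
      have hstars : star s = ∑ j, star (c j) := by rw [hs, star_sum]
      have hstart : star t = ∑ j, star (c j) * ε j := by
        rw [ht, star_sum]
        refine Finset.sum_congr rfl fun j _ => ?_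
        rw [star_mul']
        congr 1
        exact Complex.conj_ofReal _
      rw [hstars, hstart, hs, ht, Finset.sum_mul_sum, Finset.sum_mul_sum,
        Finset.mul_sum, Finset.mul_sum, ← Finset.sum_add_distrib]
      refine Finset.sum_congr rfl fun i _ => ?_
      rw [Finset.mul_sum, Finset.mul_sum, ← Finset.sum_add_distrib]
      refine Finset.sum_congr rfl fun j _ => ?_
      rw [expand i j]
      ring
    have key2 : (∑ i, ∑ j, c i * star (c j) *
          (ζ ((z i).1 - (z j).1) ((z i).2 - (z j).2) : ℂ))
        = (((α * Complex.normSq s + (1 - α) * Complex.normSq t : ℝ)) : ℂ) := by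
      rw [key]
      rw [show (star s : ℂ) = (starRingEnd ℂ) s from rfl,
        show (star t : ℂ) = (starRingEnd ℂ) t from rfl,
        Complex.mul_conj, Complex.mul_conj]
      push_cast
      ring
    rw [key2]
    constructor
    · rw [Complex.ofReal_re]
      have := Complex.normSq_nonneg s
      have := Complex.normSq_nonneg t
      nlinarith
    · rw [Complex.ofReal_im]
  · intro m n
    have hadd : ∀ a b : ℤ, (-1:ℝ) ^ (a + b) = (-1:ℝ) ^ a * (-1:ℝ) ^ b :=
      fun a b => zpow_add₀ (by norm_num) a b
    have hneg1 : ∀ a : ℤ, (-1:ℝ) ^ (-a) = (-1:ℝ) ^ a := by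
      intro a; rw [zpow_neg, hinv]
    refine ⟨?_, ?_, ?_⟩
    · rw [hζ, hζ, hadd, hadd, hneg1]
    · rw [hζ, hζ, hadd, hadd, hneg1]
    · rw [hζ, hζ, add_comm m n]
  · refine ⟨1, 1, ?_⟩
    have h1 : ζ 1 0 = 2 * α - 1 := by rw [hζ]; norm_num; ring
    have h2 : ζ 1 1 = 1 := by rw [hζ]; norm_num
    rw [h1, h2]
    nlinarith
end

section
/- With ϑ(x,y) = (1/9)·(1 + 2cos(2πx) + 2cos(2πy) - 2cos(2π(x+y)) - 2cos(2π(x-y)))², the finite Riesz products f^{(N)}(x,y) = ∏_{ℓ=0}^{N-1} ϑ(3^ℓ x, 3^ℓ y) are nonnegative, ℤ²-periodic, and satisfy ∫₀¹∫₀¹ f^{(N)}(x,y) dx dy = 1 for every N ≥ 0. -/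
set_option maxHeartbeats 2000000
open Real

section Aux
variable (ϑ : ℝ → ℝ → ℝ)
    (hϑ : ∀ x y, ϑ x y = (1/9) * (1 + 2 * Real.cos (2*π*x) + 2 * Real.cos (2*π*y)
      - 2 * Real.cos (2*π*(x+y)) - 2 * Real.cos (2*π*(x-y))) ^ 2)
    (f : ℕ → ℝ → ℝ → ℝ)
    (hf : ∀ N x y, f N x y = ∏ ℓ ∈ Finset.range N, ϑ ((3:ℝ)^ℓ * x) ((3:ℝ)^ℓ * y))

include hϑ in
private lemma theta_per (x y : ℝ) (m n : ℤ) : ϑ (x + (m:ℝ)) (y + (n:ℝ)) = ϑ x y := by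
  rw [hϑ, hϑ]
  rw [show 2*π*(x + (m:ℝ)) = 2*π*x + (m:ℝ) * (2*π) by push_cast; ring,
      Real.cos_add_int_mul_two_pi,
      show 2*π*(y + (n:ℝ)) = 2*π*y + (n:ℝ) * (2*π) by push_cast; ring,
      Real.cos_add_int_mul_two_pi,
      show 2*π*((x + (m:ℝ)) + (y + (n:ℝ))) = 2*π*(x+y) + ((m+n : ℤ):ℝ) * (2*π) by push_cast; ring,
      Real.cos_add_int_mul_two_pi,
      show 2*π*((x + (m:ℝ)) - (y + (n:ℝ))) = 2*π*(x-y) + ((m-n : ℤ):ℝ) * (2*π) by push_cast; ring,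
      Real.cos_add_int_mul_two_pi]

include hϑ hf in
private lemma f_shift (N : ℕ) (x y : ℝ) (m n : ℤ) :
    f N (x + (m:ℝ)) (y + (n:ℝ)) = f N x y := by
  rw [hf, hf]
  refine Finset.prod_congr rfl fun ℓ _ => ?_
  rw [show (3:ℝ)^ℓ * (x + (m:ℝ)) = (3:ℝ)^ℓ * x + ((3^ℓ * m : ℤ):ℝ) by push_cast; ring,
      show (3:ℝ)^ℓ * (y + (n:ℝ)) = (3:ℝ)^ℓ * y + ((3^ℓ * n : ℤ):ℝ) by push_cast; ring,
      theta_per ϑ hϑ]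

include hϑ in
private lemma theta_cont : Continuous fun p : ℝ × ℝ => ϑ p.1 p.2 := by
  have : (fun p : ℝ × ℝ => ϑ p.1 p.2) = fun p : ℝ × ℝ =>
      (1/9) * (1 + 2 * Real.cos (2*π*p.1) + 2 * Real.cos (2*π*p.2)
      - 2 * Real.cos (2*π*(p.1+p.2)) - 2 * Real.cos (2*π*(p.1-p.2))) ^ 2 :=
    funext fun p => hϑ p.1 p.2
  rw [this]; fun_prop

include hϑ hf in
private lemma f_cont (N : ℕ) : Continuous fun p : ℝ × ℝ => f N p.1 p.2 := by
  have : (fun p : ℝ × ℝ => f N p.1 p.2) = fun p : ℝ × ℝ =>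
      ∏ ℓ ∈ Finset.range N, ϑ ((3:ℝ)^ℓ * p.1) ((3:ℝ)^ℓ * p.2) :=
    funext fun p => hf N p.1 p.2
  rw [this]
  apply continuous_finset_prod
  intro i _
  exact (theta_cont ϑ hϑ).comp
    ((continuous_const.mul continuous_fst).prodMk (continuous_const.mul continuous_snd))

private lemma third_split (g : ℝ → ℝ) (hg : Continuous g) :
    ∫ t in (0:ℝ)..1, g t
      = (1/3) * ∑ k ∈ Finset.range 3, ∫ v in (0:ℝ)..1, g ((v + (k:ℝ))/3) := by
  have hp : ∀ (k a b : ℝ), k/3 = a → (1+k)/3 = b →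
      (∫ v in (0:ℝ)..1, g ((v+k)/3)) = 3 * ∫ t in a..b, g t := by
    rintro k a b rfl rfl
    rw [show (∫ v in (0:ℝ)..1, g ((v+k)/3)) = ∫ w in (0:ℝ)+k..1+k, g (w/3) from
        intervalIntegral.integral_comp_add_right (fun w => g (w/3)) k,
      intervalIntegral.integral_comp_div g (by norm_num : (3:ℝ) ≠ 0), smul_eq_mul]
    norm_num
  have i1 : IntervalIntegrable g MeasureTheory.volume 0 (1/3) := hg.intervalIntegrable _ _
  have i2 : IntervalIntegrable g MeasureTheory.volume (1/3) (2/3) := hg.intervalIntegrable _ _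
  have i3 : IntervalIntegrable g MeasureTheory.volume (2/3) 1 := hg.intervalIntegrable _ _
  have hs1 : (∫ t in (0:ℝ)..(1/3), g t) + (∫ t in (1/3:ℝ)..(2/3), g t)
      = ∫ t in (0:ℝ)..(2/3), g t := intervalIntegral.integral_add_adjacent_intervals i1 i2
  have hs2 : (∫ t in (0:ℝ)..(2/3), g t) + (∫ t in (2/3:ℝ)..1, g t)
      = ∫ t in (0:ℝ)..1, g t :=
    intervalIntegral.integral_add_adjacent_intervals (i1.trans i2) i3
  simp only [Finset.sum_range_succ, Finset.sum_range_zero, Nat.cast_zero, Nat.cast_one,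
    Nat.cast_ofNat, zero_add]
  rw [hp 0 0 (1/3) (by norm_num) (by norm_num), hp 1 (1/3) (2/3) (by norm_num) (by norm_num),
    hp 2 (2/3) 1 (by norm_num) (by norm_num)]
  linarith [hs1, hs2]

end Aux

private theorem theta_sum (ϑ : ℝ → ℝ → ℝ)
    (hϑ : ∀ x y, ϑ x y = (1/9) * (1 + 2 * Real.cos (2*π*x) + 2 * Real.cos (2*π*y)
      - 2 * Real.cos (2*π*(x+y)) - 2 * Real.cos (2*π*(x-y))) ^ 2) (x y : ℝ) :
    ∑ j ∈ Finset.range 3, ∑ k ∈ Finset.range 3, ϑ ((x + (j:ℝ))/3) ((y + (k:ℝ))/3) = 9 := by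
  have hc1 : Real.cos (2 * π / 3) = -(1/2) := by
    rw [show 2 * π / 3 = π - π/3 by ring, Real.cos_pi_sub, Real.cos_pi_div_three]
  have hs1 : Real.sin (2 * π / 3) = Real.sqrt 3 / 2 := by
    rw [show 2 * π / 3 = π - π/3 by ring, Real.sin_pi_sub, Real.sin_pi_div_three]
  have hc2 : Real.cos (2 * (2 * π / 3)) = -(1/2) := by
    rw [show 2 * (2 * π / 3) = π + π/3 by ring, Real.cos_add, Real.cos_pi, Real.sin_pi,
      Real.cos_pi_div_three]; ring
  have hs2 : Real.sin (2 * (2 * π / 3)) = -(Real.sqrt 3 / 2) := by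
    rw [show 2 * (2 * π / 3) = π + π/3 by ring, Real.sin_add, Real.cos_pi, Real.sin_pi,
      Real.sin_pi_div_three]; ring
  have hpx : Real.sin (π * x * (2 / 3)) ^ 2 + Real.cos (π * x * (2 / 3)) ^ 2 = 1 :=
    Real.sin_sq_add_cos_sq _
  have hpy : Real.sin (π * y * (2 / 3)) ^ 2 + Real.cos (π * y * (2 / 3)) ^ 2 = 1 :=
    Real.sin_sq_add_cos_sq _
  have hr3 : Real.sqrt 3 ^ 2 = 3 := Real.sq_sqrt (by norm_num)
  simp only [hϑ, Finset.sum_range_succ, Finset.sum_range_zero]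
  push_cast
  ring_nf
  have hh1 : Real.cos (π * (-2 / 3) + π * x * (2 / 3) + π * y * (-2 / 3)) = (Real.cos (π * x * (2 / 3)) * Real.cos (π * y * (2 / 3)) + Real.sin (π * x * (2 / 3)) * Real.sin (π * y * (2 / 3))) * (-(1/2)) + (Real.sin (π * x * (2 / 3)) * Real.cos (π * y * (2 / 3)) - Real.cos (π * x * (2 / 3)) * Real.sin (π * y * (2 / 3))) * (Real.sqrt 3 / 2) := by
    rw [show π * (-2 / 3) + π * x * (2 / 3) + π * y * (-2 / 3) = ((π * x * (2 / 3) - π * y * (2 / 3)) + 2 * (2 * π / 3)) + (-1 : ℤ) * (2 * π) by push_cast; ring, Real.cos_add_int_mul_two_pi]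
    simp only [Real.cos_add, Real.sin_add, Real.cos_sub, Real.sin_sub, hc1, hs1, hc2, hs2]
    try ring
  have hh2 : Real.cos (π * (-4 / 3) + π * x * (2 / 3) + π * y * (-2 / 3)) = (Real.cos (π * x * (2 / 3)) * Real.cos (π * y * (2 / 3)) + Real.sin (π * x * (2 / 3)) * Real.sin (π * y * (2 / 3))) * (-(1/2)) - (Real.sin (π * x * (2 / 3)) * Real.cos (π * y * (2 / 3)) - Real.cos (π * x * (2 / 3)) * Real.sin (π * y * (2 / 3))) * (Real.sqrt 3 / 2) := by
    rw [show π * (-4 / 3) + π * x * (2 / 3) + π * y * (-2 / 3) = ((π * x * (2 / 3) - π * y * (2 / 3)) + 2 * π / 3) + (-1 : ℤ) * (2 * π) by push_cast; ring, Real.cos_add_int_mul_two_pi]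
    simp only [Real.cos_add, Real.sin_add, Real.cos_sub, Real.sin_sub, hc1, hs1, hc2, hs2]
    try ring
  have hh3 : Real.cos (π * (2 / 3) + π * x * (2 / 3)) = Real.cos (π * x * (2 / 3)) * (-(1/2)) - Real.sin (π * x * (2 / 3)) * (Real.sqrt 3 / 2) := by
    rw [show π * (2 / 3) + π * x * (2 / 3) = π * x * (2 / 3) + 2 * π / 3 by ring]
    simp only [Real.cos_add, Real.sin_add, Real.cos_sub, Real.sin_sub, hc1, hs1, hc2, hs2]
    try ring
  have hh4 : Real.cos (π * (2 / 3) + π * x * (2 / 3) + π * y * (-2 / 3)) = (Real.cos (π * x * (2 / 3)) * Real.cos (π * y * (2 / 3)) + Real.sin (π * x * (2 / 3)) * Real.sin (π * y * (2 / 3))) * (-(1/2)) - (Real.sin (π * x * (2 / 3)) * Real.cos (π * y * (2 / 3)) - Real.cos (π * x * (2 / 3)) * Real.sin (π * y * (2 / 3))) * (Real.sqrt 3 / 2) := by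
    rw [show π * (2 / 3) + π * x * (2 / 3) + π * y * (-2 / 3) = (π * x * (2 / 3) - π * y * (2 / 3)) + 2 * π / 3 by ring]
    simp only [Real.cos_add, Real.sin_add, Real.cos_sub, Real.sin_sub, hc1, hs1, hc2, hs2]
    try ring
  have hh5 : Real.cos (π * (2 / 3) + π * x * (2 / 3) + π * y * (2 / 3)) = (Real.cos (π * x * (2 / 3)) * Real.cos (π * y * (2 / 3)) - Real.sin (π * x * (2 / 3)) * Real.sin (π * y * (2 / 3))) * (-(1/2)) - (Real.sin (π * x * (2 / 3)) * Real.cos (π * y * (2 / 3)) + Real.cos (π * x * (2 / 3)) * Real.sin (π * y * (2 / 3))) * (Real.sqrt 3 / 2) := by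
    rw [show π * (2 / 3) + π * x * (2 / 3) + π * y * (2 / 3) = (π * x * (2 / 3) + π * y * (2 / 3)) + 2 * π / 3 by ring]
    simp only [Real.cos_add, Real.sin_add, Real.cos_sub, Real.sin_sub, hc1, hs1, hc2, hs2]
    try ring
  have hh6 : Real.cos (π * (2 / 3) + π * y * (2 / 3)) = Real.cos (π * y * (2 / 3)) * (-(1/2)) - Real.sin (π * y * (2 / 3)) * (Real.sqrt 3 / 2) := by
    rw [show π * (2 / 3) + π * y * (2 / 3) = π * y * (2 / 3) + 2 * π / 3 by ring]
    simp only [Real.cos_add, Real.sin_add, Real.cos_sub, Real.sin_sub, hc1, hs1, hc2, hs2]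
    try ring
  have hh7 : Real.cos (π * (4 / 3) + π * x * (2 / 3)) = Real.cos (π * x * (2 / 3)) * (-(1/2)) + Real.sin (π * x * (2 / 3)) * (Real.sqrt 3 / 2) := by
    rw [show π * (4 / 3) + π * x * (2 / 3) = π * x * (2 / 3) + 2 * (2 * π / 3) by ring]
    simp only [Real.cos_add, Real.sin_add, Real.cos_sub, Real.sin_sub, hc1, hs1, hc2, hs2]
    try ring
  have hh8 : Real.cos (π * (4 / 3) + π * x * (2 / 3) + π * y * (-2 / 3)) = (Real.cos (π * x * (2 / 3)) * Real.cos (π * y * (2 / 3)) + Real.sin (π * x * (2 / 3)) * Real.sin (π * y * (2 / 3))) * (-(1/2)) + (Real.sin (π * x * (2 / 3)) * Real.cos (π * y * (2 / 3)) - Real.cos (π * x * (2 / 3)) * Real.sin (π * y * (2 / 3))) * (Real.sqrt 3 / 2) := by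
    rw [show π * (4 / 3) + π * x * (2 / 3) + π * y * (-2 / 3) = (π * x * (2 / 3) - π * y * (2 / 3)) + 2 * (2 * π / 3) by ring]
    simp only [Real.cos_add, Real.sin_add, Real.cos_sub, Real.sin_sub, hc1, hs1, hc2, hs2]
    try ring
  have hh9 : Real.cos (π * (4 / 3) + π * x * (2 / 3) + π * y * (2 / 3)) = (Real.cos (π * x * (2 / 3)) * Real.cos (π * y * (2 / 3)) - Real.sin (π * x * (2 / 3)) * Real.sin (π * y * (2 / 3))) * (-(1/2)) + (Real.sin (π * x * (2 / 3)) * Real.cos (π * y * (2 / 3)) + Real.cos (π * x * (2 / 3)) * Real.sin (π * y * (2 / 3))) * (Real.sqrt 3 / 2) := by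
    rw [show π * (4 / 3) + π * x * (2 / 3) + π * y * (2 / 3) = (π * x * (2 / 3) + π * y * (2 / 3)) + 2 * (2 * π / 3) by ring]
    simp only [Real.cos_add, Real.sin_add, Real.cos_sub, Real.sin_sub, hc1, hs1, hc2, hs2]
    try ring
  have hh10 : Real.cos (π * (4 / 3) + π * y * (2 / 3)) = Real.cos (π * y * (2 / 3)) * (-(1/2)) + Real.sin (π * y * (2 / 3)) * (Real.sqrt 3 / 2) := by
    rw [show π * (4 / 3) + π * y * (2 / 3) = π * y * (2 / 3) + 2 * (2 * π / 3) by ring]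
    simp only [Real.cos_add, Real.sin_add, Real.cos_sub, Real.sin_sub, hc1, hs1, hc2, hs2]
    try ring
  have hh11 : Real.cos (π * (8 / 3) + π * x * (2 / 3) + π * y * (2 / 3)) = (Real.cos (π * x * (2 / 3)) * Real.cos (π * y * (2 / 3)) - Real.sin (π * x * (2 / 3)) * Real.sin (π * y * (2 / 3))) * (-(1/2)) - (Real.sin (π * x * (2 / 3)) * Real.cos (π * y * (2 / 3)) + Real.cos (π * x * (2 / 3)) * Real.sin (π * y * (2 / 3))) * (Real.sqrt 3 / 2) := by
    rw [show π * (8 / 3) + π * x * (2 / 3) + π * y * (2 / 3) = ((π * x * (2 / 3) + π * y * (2 / 3)) + 2 * π / 3) + (1 : ℤ) * (2 * π) by push_cast; ring, Real.cos_add_int_mul_two_pi]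
    simp only [Real.cos_add, Real.sin_add, Real.cos_sub, Real.sin_sub, hc1, hs1, hc2, hs2]
    try ring
  have hh12 : Real.cos (π * 2 + π * x * (2 / 3) + π * y * (2 / 3)) = (Real.cos (π * x * (2 / 3)) * Real.cos (π * y * (2 / 3)) - Real.sin (π * x * (2 / 3)) * Real.sin (π * y * (2 / 3))) := by
    rw [show π * 2 + π * x * (2 / 3) + π * y * (2 / 3) = ((π * x * (2 / 3) + π * y * (2 / 3))) + (1 : ℤ) * (2 * π) by push_cast; ring, Real.cos_add_int_mul_two_pi]
    simp only [Real.cos_add, Real.sin_add, Real.cos_sub, Real.sin_sub, hc1, hs1, hc2, hs2]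
    try ring
  have hh13 : Real.cos (π * x * (2 / 3) + π * y * (-2 / 3)) = (Real.cos (π * x * (2 / 3)) * Real.cos (π * y * (2 / 3)) + Real.sin (π * x * (2 / 3)) * Real.sin (π * y * (2 / 3))) := by
    rw [show π * x * (2 / 3) + π * y * (-2 / 3) = (π * x * (2 / 3) - π * y * (2 / 3)) by ring]
    simp only [Real.cos_add, Real.sin_add, Real.cos_sub, Real.sin_sub, hc1, hs1, hc2, hs2]
    try ring
  have hh14 : Real.cos (π * x * (2 / 3) + π * y * (2 / 3)) = (Real.cos (π * x * (2 / 3)) * Real.cos (π * y * (2 / 3)) - Real.sin (π * x * (2 / 3)) * Real.sin (π * y * (2 / 3))) := by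
    rw [show π * x * (2 / 3) + π * y * (2 / 3) = (π * x * (2 / 3) + π * y * (2 / 3)) by ring]
    simp only [Real.cos_add, Real.sin_add, Real.cos_sub, Real.sin_sub, hc1, hs1, hc2, hs2]
    try ring
  simp only [hh1, hh2, hh3, hh4, hh5, hh6, hh7, hh8, hh9, hh10, hh11, hh12, hh13, hh14]
  linear_combination (2 + 4 * Real.sin (π * y * (2 / 3)) ^ 2 + 4 * Real.cos (π * y * (2 / 3)) ^ 2) * hpx + 6 * hpy + ((2/3) * Real.sin (π * y * (2 / 3)) ^ 2 + (2/3) * Real.sin (π * x * (2 / 3)) ^ 2 + (4/3) * Real.sin (π * x * (2 / 3)) ^ 2 * Real.cos (π * y * (2 / 3)) ^ 2 + (4/3) * Real.cos (π * x * (2 / 3)) ^ 2 * Real.sin (π * y * (2 / 3)) ^ 2) * hr3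

theorem squiral_riesz_product_2d (ϑ : ℝ → ℝ → ℝ)
    (hϑ : ∀ x y, ϑ x y = (1/9) * (1 + 2 * Real.cos (2*π*x) + 2 * Real.cos (2*π*y)
      - 2 * Real.cos (2*π*(x+y)) - 2 * Real.cos (2*π*(x-y))) ^ 2)
    (f : ℕ → ℝ → ℝ → ℝ)
    (hf : ∀ N x y, f N x y = ∏ ℓ ∈ Finset.range N, ϑ ((3:ℝ)^ℓ * x) ((3:ℝ)^ℓ * y)) :
    ∀ N : ℕ,
      (∀ x y, 0 ≤ f N x y) ∧
      (∀ x y, f N (x + 1) y = f N x y ∧ f N x (y + 1) = f N x y) ∧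
      (∫ x in (0:ℝ)..1, ∫ y in (0:ℝ)..1, f N x y) = 1 := by
  have hϑc := theta_cont ϑ hϑ
  have hfc := f_cont ϑ hϑ f hf
  -- continuity helpers
  have hϑ2 : ∀ a : ℝ, Continuous fun v => ϑ a v :=
    fun a => hϑc.comp (continuous_const.prodMk continuous_id)
  have hf2 : ∀ N (u : ℝ), Continuous fun v => f N u v :=
    fun N u => (hfc N).comp (continuous_const.prodMk continuous_id)
  intro N
  refine ⟨?_, ?_, ?_⟩
  · intro x y
    rw [hf]
    apply Finset.prod_nonneg
    intro i _
    rw [hϑ]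
    positivity
  · intro x y
    constructor
    · have := f_shift ϑ hϑ f hf N x y 1 0
      push_cast at this
      simpa using this
    · have := f_shift ϑ hϑ f hf N x y 0 1
      push_cast at this
      simpa using this
  · induction N with
    | zero =>
      have h0 : ∀ x y : ℝ, f 0 x y = 1 := by intro x y; rw [hf]; simp
      simp only [h0]
      simp
    | succ N ih =>
      have hsplit : ∀ x y, f (N+1) x y = ϑ x y * f N (3*x) (3*y) := by
        intro x y
        rw [hf, hf, Finset.prod_range_succ']
        simp only [pow_zero, one_mul]
        rw [mul_comm]
        congr 1
        refine Finset.prod_congr rfl fun ℓ _ => ?_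
        rw [show (3:ℝ)^(ℓ+1) * x = (3:ℝ)^ℓ * (3*x) by ring,
            show (3:ℝ)^(ℓ+1) * y = (3:ℝ)^ℓ * (3*y) by ring]
      simp only [hsplit]
      set G : ℝ → ℝ := fun x => ∫ y in (0:ℝ)..1, ϑ x y * f N (3*x) (3*y) with hGdef
      have hunc : Continuous (Function.uncurry fun x y => ϑ x y * f N (3*x) (3*y)) := by
        exact hϑc.mul ((hfc N).comp
          ((continuous_const.mul continuous_fst).prodMk (continuous_const.mul continuous_snd)))
      have hGc : Continuous G :=
        intervalIntegral.continuous_parametric_intervalIntegral_of_continuous' hunc 0 1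
      clear_value G
      have step3 : ∀ (j : ℕ) (u : ℝ), G ((u+(j:ℝ))/3)
          = (1/3) * ∑ k ∈ Finset.range 3,
              ∫ v in (0:ℝ)..1, ϑ ((u+(j:ℝ))/3) ((v+(k:ℝ))/3) * f N u v := by
        intro j u
        have h3a : 3 * ((u+(j:ℝ))/3) = u + (j:ℝ) := by ring
        simp only [hGdef]
        simp only [h3a]
        rw [third_split (fun y => ϑ ((u+(j:ℝ))/3) y * f N (u+(j:ℝ)) (3*y))
            ((hϑ2 _).mul ((hf2 N _).comp (continuous_const.mul continuous_id)))]
        congr 1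
        refine Finset.sum_congr rfl fun k _ => ?_
        apply intervalIntegral.integral_congr
        intro v _
        simp only
        rw [show 3*((v+(k:ℝ))/3) = v + (k:ℝ) by ring,
            show u + (j:ℝ) = u + ((j:ℤ):ℝ) by push_cast; ring,
            show v + (k:ℝ) = v + ((k:ℤ):ℝ) by push_cast; ring,
            f_shift ϑ hϑ f hf]
      have hTi : ∀ (j k : ℕ) (u : ℝ), IntervalIntegrable
          (fun v => ϑ ((u+(j:ℝ))/3) ((v+(k:ℝ))/3) * f N u v) MeasureTheory.volume 0 1 := by
        intro j k u
        exact (((hϑ2 _).comp (by fun_prop)).mul (hf2 N u)).intervalIntegrable _ _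
      have hptu : ∀ u : ℝ, (∑ j ∈ Finset.range 3, G ((u+(j:ℝ))/3))
          = 3 * ∫ v in (0:ℝ)..1, f N u v := by
        intro u
        calc (∑ j ∈ Finset.range 3, G ((u+(j:ℝ))/3))
            = ∑ j ∈ Finset.range 3, (1/3) * ∑ k ∈ Finset.range 3,
                ∫ v in (0:ℝ)..1, ϑ ((u+(j:ℝ))/3) ((v+(k:ℝ))/3) * f N u v :=
              Finset.sum_congr rfl fun j _ => step3 j u
          _ = (1/3) * ∑ j ∈ Finset.range 3, ∑ k ∈ Finset.range 3,
                ∫ v in (0:ℝ)..1, ϑ ((u+(j:ℝ))/3) ((v+(k:ℝ))/3) * f N u v := by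
              rw [Finset.mul_sum]
          _ = (1/3) * ∑ j ∈ Finset.range 3,
                ∫ v in (0:ℝ)..1, ∑ k ∈ Finset.range 3,
                  ϑ ((u+(j:ℝ))/3) ((v+(k:ℝ))/3) * f N u v := by
              congr 1
              refine Finset.sum_congr rfl fun j _ => ?_
              rw [intervalIntegral.integral_finset_sum (fun k _ => hTi j k u)]
          _ = (1/3) * ∫ v in (0:ℝ)..1, ∑ j ∈ Finset.range 3, ∑ k ∈ Finset.range 3,
                ϑ ((u+(j:ℝ))/3) ((v+(k:ℝ))/3) * f N u v := by
              congr 1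
              exact (intervalIntegral.integral_finset_sum
                (fun j _ => IntervalIntegrable.sum (Finset.range 3) (fun k _ => hTi j k u))).symm
          _ = (1/3) * ∫ v in (0:ℝ)..1, 9 * f N u v := by
              congr 1
              apply intervalIntegral.integral_congr
              intro v _
              simp only [← Finset.sum_mul]
              rw [theta_sum ϑ hϑ u v]
          _ = (1/3) * (9 * ∫ v in (0:ℝ)..1, f N u v) := by
              rw [intervalIntegral.integral_const_mul]
          _ = 3 * ∫ v in (0:ℝ)..1, f N u v := by ring
      calc (∫ x in (0:ℝ)..1, G x)
          = (1/3) * ∑ j ∈ Finset.range 3, ∫ u in (0:ℝ)..1, G ((u+(j:ℝ))/3) :=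
            third_split G hGc
        _ = (1/3) * ∫ u in (0:ℝ)..1, ∑ j ∈ Finset.range 3, G ((u+(j:ℝ))/3) := by
            congr 1
            exact (intervalIntegral.integral_finset_sum
              (fun j _ => (hGc.comp (by fun_prop)).intervalIntegrable 0 1)).symm
        _ = (1/3) * ∫ u in (0:ℝ)..1, 3 * ∫ v in (0:ℝ)..1, f N u v := by
            congr 1
            exact intervalIntegral.integral_congr fun u _ => hptu u
        _ = (1/3) * (3 * ∫ u in (0:ℝ)..1, ∫ v in (0:ℝ)..1, f N u v) := by
            rw [intervalIntegral.integral_const_mul]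
        _ = 1 := by rw [ih]; ring
end

section
/- Let c_n: ℕ → ℝ be defined by c₀(m) = δ_{m,0} and the recursions c_n(3m) = c_{n-1}(m), c_n(3m+1) = -(2/9)c_{n-1}(m) + (1/3)c_{n-1}(m+1), c_n(3m+2) = (1/3)c_{n-1}(m) - (2/9)c_{n-1}(m+1). Then the trigonometric polynomial φ_n(x) = ∑_{m} c_n(m) e^{2πimx} (with c_n(-m) = c_n(m)) equals the Riesz product ∏_{ℓ=0}^{n-1} θ(3^ℓ x), where θ(x) = 1 - (4/9)cos(2πx) + (2/3)cos(4πx). -/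
open Real

theorem squiral_fourier_coefficients_riesz_product (c : ℕ → ℕ → ℝ)
    (hc0 : ∀ m, c 0 m = if m = 0 then 1 else 0)
    (hrec : ∀ n m, c (n+1) (3*m) = c n m ∧
      c (n+1) (3*m+1) = -(2/9) * c n m + (1/3) * c n (m+1) ∧
      c (n+1) (3*m+2) = (1/3) * c n m - (2/9) * c n (m+1))
    (θ : ℝ → ℝ)
    (hθ : ∀ x, θ x = 1 - (4/9) * Real.cos (2*π*x) + (2/3) * Real.cos (4*π*x)) :
    ∀ (n : ℕ) (x : ℝ),
      (∑ m ∈ Finset.range (3^n),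
        if m = 0 then c n m else 2 * c n m * Real.cos (2*π*m*x)) =
      ∏ ℓ ∈ Finset.range n, θ ((3:ℝ)^ℓ * x) := by
  -- vanishing of coefficients beyond 3^n
  have hz : ∀ n m, 3^n ≤ m → c n m = 0 := by
    intro n
    induction n with
    | zero =>
      intro m hm
      rw [hc0, if_neg (by omega)]
    | succ n ih =>
      intro m hm
      obtain ⟨q, r, hr, hm'⟩ : ∃ q r, r < 3 ∧ m = 3*q + r :=
        ⟨m / 3, m % 3, Nat.mod_lt _ (by norm_num), (Nat.div_add_mod m 3).symm⟩
      have hpow : (3:ℕ)^(n+1) = 3 * 3^n := by ring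
      have hq : 3^n ≤ q := by omega
      have h1 : c n q = 0 := ih q hq
      have h2 : c n (q+1) = 0 := ih (q+1) (by omega)
      obtain ⟨e0, e1, e2⟩ := hrec n q
      subst hm'
      interval_cases r
      · exact e0.trans h1
      · rw [e1, h1, h2]; ring
      · rw [e2, h1, h2]; ring
  -- splitting a sum over range (3*N)
  have hsplit : ∀ (f : ℕ → ℝ) (N : ℕ),
      ∑ m ∈ Finset.range (3*N), f m
        = ∑ k ∈ Finset.range N, (f (3*k) + f (3*k+1) + f (3*k+2)) := by
    intro f N
    induction N with
    | zero => simp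
    | succ N ih =>
      rw [Finset.sum_range_succ, ← ih, Nat.mul_succ,
        show 3*N+3 = (3*N+2)+1 by ring, Finset.sum_range_succ,
        show 3*N+2 = (3*N+1)+1 by ring, Finset.sum_range_succ,
        show 3*N+1 = (3*N)+1 by ring, Finset.sum_range_succ]
      ring
  -- generic telescoping lemma
  have tele : ∀ (F f h : ℕ → ℝ) (M : ℕ),
      (∀ k, F (k+1) = f (k+1) + (h (k+1) - h k)) → F 0 = f 0 + h 0 → h M = 0 →
      ∑ k ∈ Finset.range (M+1), F k = ∑ k ∈ Finset.range (M+1), f k := by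
    intro F f h M hk h0 hM
    rw [Finset.sum_range_succ' F, Finset.sum_range_succ' f, h0]
    simp only [hk]
    rw [Finset.sum_add_distrib, Finset.sum_range_sub, hM]
    ring
  -- main trig identity
  have trig : ∀ (a b c1 c2 : ℝ),
      2*c1*Real.cos b + 2*(-(2/9)*c1 + (1/3)*c2)*Real.cos (b+a)
        + 2*((1/3)*c1 - (2/9)*c2)*Real.cos (b+2*a)
      = 2*c1*Real.cos b*(1 - (4/9)*Real.cos a + (2/3)*Real.cos (2*a))
        + (((2/3)*c2*Real.cos (b+a) - (4/9)*c2*Real.cos (b+2*a))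
          - ((2/3)*c1*Real.cos (b-2*a) - (4/9)*c1*Real.cos (b-a))) := by
    intro a b c1 c2
    rw [show b+2*a = b+a+a by ring, show b-2*a = b-a-a by ring,
      show (2:ℝ)*a = a+a by ring]
    simp only [Real.cos_add, Real.cos_sub, Real.sin_add, Real.sin_sub]
    ring
  intro n
  induction n with
  | zero => intro x; simp [hc0]
  | succ n ih =>
    intro x
    obtain ⟨M, hM⟩ : ∃ M, 3^n = M + 1 :=
      ⟨3^n - 1, by have := Nat.one_le_pow n 3 (by norm_num); omega⟩
    rw [Finset.prod_range_succ']
    have hprod : ∏ ℓ ∈ Finset.range n, θ ((3:ℝ)^(ℓ+1) * x)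
        = ∏ ℓ ∈ Finset.range n, θ ((3:ℝ)^ℓ * (3*x)) := by
      apply Finset.prod_congr rfl
      intro ℓ _
      congr 1
      rw [pow_succ]; ring
    rw [hprod, ← ih (3*x), pow_zero, one_mul, Finset.sum_mul,
      show (3:ℕ)^(n+1) = 3*3^n by ring, hsplit, hM]
    apply tele _ _
      (fun j => (2/3)*c n (j+1)*Real.cos (2*π*(3*(j:ℝ)+1)*x)
        - (4/9)*c n (j+1)*Real.cos (2*π*(3*(j:ℝ)+2)*x)) M
    · intro k
      obtain ⟨e0, e1, e2⟩ := hrec n (k+1)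
      rw [if_neg (by omega), if_neg (by omega), if_neg (by omega), if_neg (by omega),
        e0, e1, e2, hθ x]
      have h0 : (2*π*((3*(k+1) : ℕ):ℝ)*x) = 2*π*(3*(k:ℝ)+3)*x := by push_cast; ring
      have h1 : (2*π*((3*(k+1)+1 : ℕ):ℝ)*x) = 2*π*(3*(k:ℝ)+3)*x + 2*π*x := by push_cast; ring
      have h2 : (2*π*((3*(k+1)+2 : ℕ):ℝ)*x) = 2*π*(3*(k:ℝ)+3)*x + 2*(2*π*x) := by push_cast; ring
      have h3 : (2*π*((k+1 : ℕ):ℝ)*(3*x)) = 2*π*(3*(k:ℝ)+3)*x := by push_cast; ring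
      have h4 : (4*π*x) = 2*(2*π*x) := by ring
      have h5 : (2*π*(3*((k+1 : ℕ):ℝ)+1)*x) = 2*π*(3*(k:ℝ)+3)*x + 2*π*x := by push_cast; ring
      have h6 : (2*π*(3*((k+1 : ℕ):ℝ)+2)*x) = 2*π*(3*(k:ℝ)+3)*x + 2*(2*π*x) := by push_cast; ring
      have h7 : (2*π*(3*(k:ℝ)+1)*x) = 2*π*(3*(k:ℝ)+3)*x - 2*(2*π*x) := by ring
      have h8 : (2*π*(3*(k:ℝ)+2)*x) = 2*π*(3*(k:ℝ)+3)*x - 2*π*x := by ring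
      rw [h0, h1, h2, h3, h4, h5, h6, h7, h8]
      have := trig (2*π*x) (2*π*(3*(k:ℝ)+3)*x) (c n (k+1)) (c n (k+2))
      linarith [this]
    · obtain ⟨e0, e1, e2⟩ := hrec n 0
      norm_num at e0 e1 e2 ⊢
      rw [e0, e1, e2, hθ x, show (2*π*2*x : ℝ) = 4*π*x by ring]
      ring
    · have : c n (M+1) = 0 := hz n (M+1) (by omega)
      rw [this]; ring
end

section
/- Let ε: ℤ → ℝ satisfy ε(0)=1 and the recursions ε(3m)=ε(m), ε(3m+1)=-(2/9)ε(m)+(1/3)ε(m+1), ε(3m+2)=(1/3)ε(m)-(2/9)ε(m+1). Then ε(1) = -1/3 and ε(2) = 11/27, and (-1)^m ε(m) > 0 for all m ∈ ℤ. -/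
lemma squiral_pow3 (m : ℤ) : (-1 : ℝ) ^ (3*m) = (-1 : ℝ) ^ m := by
  have h : (3:ℤ)*m = 2*m + m := by ring
  rw [h, zpow_add₀ (by norm_num : (-1:ℝ) ≠ 0), two_mul, zpow_add₀ (by norm_num : (-1:ℝ) ≠ 0)]
  have : (-1:ℝ) ^ m * (-1:ℝ) ^ m = ((-1:ℝ)^m)^2 := by ring
  rw [this]
  have h2 : ((-1:ℝ)^m)^2 = 1 := by
    rw [← zpow_natCast ((-1:ℝ)^m) 2, ← zpow_mul]
    exact Even.neg_one_zpow ⟨m, by ring⟩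
  rw [h2, one_mul]

lemma squiral_succ (m : ℤ) : (-1 : ℝ) ^ (m+1) = -((-1 : ℝ) ^ m) := by
  rw [zpow_add₀ (by norm_num : (-1:ℝ) ≠ 0), zpow_one]; ring

theorem squiral_1d_values_and_signs (ε : ℤ → ℝ) (h0 : ε 0 = 1)
    (hrec : ∀ m : ℤ,
      ε (3*m) = ε m ∧
      ε (3*m+1) = -(2/9) * ε m + (1/3) * ε (m+1) ∧
      ε (3*m+2) = (1/3) * ε m - (2/9) * ε (m+1)) :
    ε 1 = -(1/3) ∧ ε 2 = 11/27 ∧ ∀ m : ℤ, 0 < (-1 : ℝ) ^ m * ε m := by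
  have h1 : ε 1 = -(1/3) := by
    have := (hrec 0).2.1
    norm_num at this
    linarith
  have hm1 : ε (-1) = -(1/3) := by
    have := (hrec (-1)).2.2
    norm_num at this
    linarith
  have h2 : ε 2 = 11/27 := by
    have := (hrec 0).2.2
    norm_num at this
    rw [h1] at this
    linarith
  refine ⟨h1, h2, ?_⟩
  have key : ∀ n : ℕ, ∀ m : ℤ, m.natAbs ≤ n → 0 < (-1 : ℝ) ^ m * ε m := by
    intro n
    induction n with
    | zero =>
      intro m hm
      have : m = 0 := by omega
      subst this
      simp [h0]
    | succ n ih =>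
      intro m hm
      by_cases hsmall : m.natAbs ≤ 1
      · obtain hc | hc | hc : m = -1 ∨ m = 0 ∨ m = 1 := by omega
        · subst hc; rw [hm1]; norm_num
        · subst hc; simp [h0]
        · subst hc; rw [h1]; norm_num
      · obtain ⟨k, hk⟩ : ∃ k, m = 3*k ∨ m = 3*k+1 ∨ m = 3*k+2 := ⟨m/3, by omega⟩
        have hkb : k.natAbs ≤ n := by omega
        have hk1b : (k+1).natAbs ≤ n := by omega
        have pk := ih k hkb
        have pk1 := ih (k+1) hk1b
        rw [squiral_succ] at pk1
        rcases hk with h | h | h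
        · subst h
          rw [(hrec k).1, squiral_pow3]
          exact pk
        · subst h
          rw [(hrec k).2.1, squiral_succ, squiral_pow3]
          nlinarith
        · subst h
          have : (3*k+2 : ℤ) = 3*k+1+1 := by ring
          rw [(hrec k).2.2, this, squiral_succ, squiral_succ, squiral_pow3]
          nlinarith
  intro m
  exact key m.natAbs m le_rfl
end

section
/- Let ζ: ℤ² → ℝ satisfy the squiral recursion relations with ζ(0,0) = a ≥ 0. Then ζ(m,n) = a·η(m,n), where η is the unique solution with η(0,0) = 1. In particular, ζ is positive definite on ℤ², and if a > 0 then ζ(3^k m, 3^k n) = ζ(m,n) does not tend to zero along the sequence ((3^k, 3^k))_{k ≥ 0}, since ζ(1,1) = a/6 ≠ 0. -/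
/-!
Uniqueness: the relations at the four corners around the origin express a solution on the central
block `{-1, 0, 1}²` through its value at the origin, and each box of radius `j + 2` is expressed
through the box of radius `j + 1` by relations whose coefficients have absolute sum at most `1`.
So a solution vanishing at the origin vanishes identically.

Positive definiteness: iterating the sign matrix of the squiral substitution gives `3^K`-periodic
`±1` patterns whose normalised autocorrelations `g_K` are Gram kernels, hence positive definite,
with `g_K(0,0) = 1`. The autocorrelation of level `K + 1` is obtained from that of level `K` by the
squiral relations, their coefficients being correlations of the sign matrix. Hence `g_K - η`
satisfies the relations between consecutive levels and vanishes at the origin; on the central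
block all other relations have coefficients of absolute sum `5/9`, so `g_K - η` decays like
`(5/9)^K` and `g_K → η` pointwise.
-/

open Finset

/-- The sign matrix of the squiral bijective block substitution. -/
noncomputable def squiralSign (d₁ d₂ : ℤ) : ℝ := if d₁ = 1 ∨ d₂ = 1 then -1 else 1

/-- Shifting the digit pair `d` of a `3 × 3` block by `(r, s)` lands in the neighbouring block
`(k, l)`; the coefficient correlates the signs at the two digit pairs. -/
noncomputable def squiralCoeff (r s k l : ℕ) : ℝ :=
  9⁻¹ * ∑ d ∈ range 3 ×ˢ range 3 with ((d.1 + r) / 3, (d.2 + s) / 3) = (k, l),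
    squiralSign d.1 d.2 * squiralSign ↑((d.1 + r) % 3) ↑((d.2 + s) % 3)

def SquiralRel (f g : ℤ → ℤ → ℝ) : Prop :=
  ∀ (m n : ℤ) (r s : ℕ), r < 3 → s < 3 →
    f (3 * m + r) (3 * n + s)
      = ∑ k ∈ range 2, ∑ l ∈ range 2, squiralCoeff r s k l * g (m + k) (n + l)

theorem SquiralRec.squiralRel {f : ℤ → ℤ → ℝ} (hf : SquiralRec f) : SquiralRel f f := by
  intro m n r s hr hs
  obtain ⟨h₀₀, h₀₁, h₀₂, h₁₀, h₁₁, h₁₂, h₂₀, h₂₁, h₂₂⟩ := hf m n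
  interval_cases r <;> interval_cases s <;>
    norm_num [squiralCoeff, sum_filter, sum_product, sum_range_succ, squiralSign] <;> linarith

theorem sum_abs_squiralCoeff {r s : ℕ} (hr : r < 3) (hs : s < 3) :
    ∑ k ∈ range 2, ∑ l ∈ range 2, |squiralCoeff r s k l|
      = if r = 0 ∧ s = 0 then 1 else 5 / 9 := by
  interval_cases r <;> interval_cases s <;>
    norm_num [squiralCoeff, sum_filter, sum_product, sum_range_succ, squiralSign, abs_of_nonneg,
      abs_of_nonpos]

theorem SquiralRel.sub {f g f' g' : ℤ → ℤ → ℝ} (h : SquiralRel f g) (h' : SquiralRel f' g') :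
    SquiralRel (fun m n => f m n - f' m n) (fun m n => g m n - g' m n) := by
  intro m n r s hr hs
  simp only [h m n r s hr hs, h' m n r s hr hs, mul_sub, sum_sub_distrib]

theorem SquiralRel.const_mul {f g : ℤ → ℤ → ℝ} (a : ℝ) (h : SquiralRel f g) :
    SquiralRel (fun m n => a * f m n) (fun m n => a * g m n) := by
  intro m n r s hr hs
  simp only [h m n r s hr hs, mul_sum, mul_left_comm a]

noncomputable def squiralCentral (M N : ℤ) : ℝ :=
  if M = 0 ∧ N = 0 then 1 else if M = 0 ∨ N = 0 then -1 / 3 else 1 / 6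

theorem SquiralRec.apply_eq_squiralCentral_mul {f : ℤ → ℤ → ℝ} (hf : SquiralRec f) {M N : ℤ}
    (hM : M.natAbs ≤ 1) (hN : N.natAbs ≤ 1) : f M N = squiralCentral M N * f 0 0 := by
  obtain ⟨-, h₁, -, h₂, h₃, h₄, -, -, -⟩ := hf 0 0
  obtain ⟨-, -, h₅, -, -, h₆, -, -, -⟩ := hf 0 (-1)
  obtain ⟨-, -, -, -, -, -, h₇, h₈, -⟩ := hf (-1) 0
  obtain ⟨-, -, -, -, -, -, -, -, h₉⟩ := hf (-1) (-1)
  norm_num at h₁ h₂ h₃ h₄ h₅ h₆ h₇ h₈ h₉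
  obtain ⟨hM₁, hM₂⟩ : -1 ≤ M ∧ M ≤ 1 := by omega
  obtain ⟨hN₁, hN₂⟩ : -1 ≤ N ∧ N ≤ 1 := by omega
  interval_cases M <;> interval_cases N <;> norm_num [squiralCentral] <;> linarith

def AbsLeOnBox (f : ℤ → ℤ → ℝ) (k : ℕ) (c : ℝ) : Prop :=
  ∀ M N : ℤ, M.natAbs ≤ k → N.natAbs ≤ k → |f M N| ≤ c

theorem AbsLeOnBox.nonneg {f : ℤ → ℤ → ℝ} {k : ℕ} {c : ℝ} (hf : AbsLeOnBox f k c) : 0 ≤ c :=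
  (abs_nonneg _).trans (hf 0 0 (by simp) (by simp))

theorem exists_three_mul_add (M : ℤ) : ∃ q : ℤ, ∃ r : ℕ, r < 3 ∧ M = 3 * q + r :=
  ⟨M / 3, (M % 3).toNat, by omega, by omega⟩

theorem SquiralRel.abs_apply_le {f g : ℤ → ℤ → ℝ} (h : SquiralRel f g) {m n : ℤ} {r s : ℕ}
    (hr : r < 3) (hs : s < 3) {c : ℝ}
    (hg : ∀ k : ℕ, k < 2 → ∀ l : ℕ, l < 2 → |g (m + k) (n + l)| ≤ c) :
    |f (3 * m + r) (3 * n + s)| ≤ (if r = 0 ∧ s = 0 then 1 else 5 / 9) * c := by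
  rw [h m n r s hr hs, ← sum_abs_squiralCoeff hr hs, sum_mul]
  refine (abs_sum_le_sum_abs _ _).trans (sum_le_sum fun k hk => ?_)
  rw [sum_mul]
  refine (abs_sum_le_sum_abs _ _).trans (sum_le_sum fun l hl => ?_)
  rw [abs_mul]
  exact mul_le_mul_of_nonneg_left (hg k (mem_range.1 hk) l (mem_range.1 hl)) (abs_nonneg _)

theorem SquiralRel.absLeOnBox_succ {f g : ℤ → ℤ → ℝ} (h : SquiralRel f g) {k : ℕ} {c : ℝ}
    (hg : AbsLeOnBox g (k + 1) c) : AbsLeOnBox f (k + 2) c := by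
  intro M N hM hN
  obtain ⟨q, r, hr, rfl⟩ := exists_three_mul_add M
  obtain ⟨p, s, hs, rfl⟩ := exists_three_mul_add N
  refine (h.abs_apply_le hr hs fun a ha b hb => hg _ _ (by omega) (by omega)).trans ?_
  have := hg.nonneg
  split_ifs <;> linarith

theorem SquiralRel.absLeOnBox_one {f g : ℤ → ℤ → ℝ} (h : SquiralRel f g) (hf : f 0 0 = 0)
    {c : ℝ} (hg : AbsLeOnBox g 1 c) : AbsLeOnBox f 1 (5 / 9 * c) := by
  intro M N hM hN
  obtain ⟨q, r, hr, rfl⟩ := exists_three_mul_add M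
  obtain ⟨p, s, hs, rfl⟩ := exists_three_mul_add N
  by_cases hrs : r = 0 ∧ s = 0
  · obtain ⟨rfl, rfl⟩ := hrs
    obtain ⟨rfl, rfl⟩ : q = 0 ∧ p = 0 := by omega
    simpa [hf] using hg.nonneg
  · simpa [hrs] using h.abs_apply_le hr hs fun a ha b hb => hg _ _ (by omega) (by omega)

theorem absLeOnBox_add_of_squiralRel_succ {D : ℕ → ℤ → ℤ → ℝ}
    (hD : ∀ K, SquiralRel (D (K + 1)) (D K)) {K : ℕ} {c : ℝ} (hc : AbsLeOnBox (D K) 1 c)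
    (j : ℕ) : AbsLeOnBox (D (K + j)) (j + 1) c := by
  induction j with
  | zero => exact hc
  | succ j ih => exact (hD (K + j)).absLeOnBox_succ ih

open Filter Topology in
theorem tendsto_zero_of_squiralRel_succ {D : ℕ → ℤ → ℤ → ℝ}
    (hD : ∀ K, SquiralRel (D (K + 1)) (D K)) (h₀ : ∀ K, D K 0 0 = 0) {c : ℝ}
    (hc : AbsLeOnBox (D 0) 1 c) (M N : ℤ) : Tendsto (fun K => D K M N) atTop (𝓝 0) := by
  have hcentral : ∀ K, AbsLeOnBox (D K) 1 ((5 / 9) ^ K * c) := by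
    intro K
    induction K with
    | zero => simpa using hc
    | succ K ih =>
      rw [pow_succ', mul_assoc]
      exact (hD K).absLeOnBox_one (h₀ _) ih
  set j := max M.natAbs N.natAbs
  rw [← tendsto_add_atTop_iff_nat j]
  refine squeeze_zero_norm
    (fun K => absLeOnBox_add_of_squiralRel_succ hD (hcentral K) j M N (by omega) (by omega)) ?_
  simpa using (tendsto_pow_atTop_nhds_zero_of_lt_one (by norm_num : (0 : ℝ) ≤ 5 / 9)
    (by norm_num)).mul_const c

theorem SquiralRec.apply_eq_apply_zero_zero_mul {ζ η : ℤ → ℤ → ℝ} (hζ : SquiralRec ζ)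
    (hη : SquiralRec η) (hη₀ : η 0 0 = 1) (M N : ℤ) : ζ M N = ζ 0 0 * η M N := by
  set D := fun m n => ζ m n - ζ 0 0 * η m n
  have hD : SquiralRel D D := hζ.squiralRel.sub (hη.squiralRel.const_mul _)
  have hcentral : AbsLeOnBox D 1 0 := by
    intro M N hM hN
    simp [D, hζ.apply_eq_squiralCentral_mul hM hN, hη.apply_eq_squiralCentral_mul hM hN, hη₀,
      mul_comm]
  have := absLeOnBox_add_of_squiralRel_succ (D := fun _ => D) (K := 0) (fun _ => hD) hcentral
    (max M.natAbs N.natAbs) M N (by omega) (by omega)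
  simpa [D, sub_eq_zero] using this

open scoped ComplexOrder

def IsPositiveDefinite (f : ℤ → ℤ → ℝ) : Prop :=
  ∀ (N : ℕ) (z : Fin N → ℤ × ℤ) (c : Fin N → ℂ),
    0 ≤ ∑ i, ∑ j, c i * star (c j) * (f ((z i).1 - (z j).1) ((z i).2 - (z j).2) : ℂ)

theorem IsPositiveDefinite.const_mul {f : ℤ → ℤ → ℝ} (hf : IsPositiveDefinite f) {a : ℝ}
    (ha : 0 ≤ a) : IsPositiveDefinite (fun m n => a * f m n) := by
  intro N z c
  have h : ∑ i, ∑ j, c i * star (c j) * ((a * f ((z i).1 - (z j).1) ((z i).2 - (z j).2) : ℝ) : ℂ)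
      = a * ∑ i, ∑ j, c i * star (c j) * (f ((z i).1 - (z j).1) ((z i).2 - (z j).2) : ℂ) := by
    simp only [mul_sum]
    refine sum_congr rfl fun i _ => sum_congr rfl fun j _ => ?_
    push_cast
    ring
  rw [h]
  exact mul_nonneg (Complex.zero_le_real.2 ha) (hf N z c)

open Filter Topology in
theorem IsPositiveDefinite.of_tendsto {F : ℕ → ℤ → ℤ → ℝ} {f : ℤ → ℤ → ℝ}
    (hF : ∀ K, IsPositiveDefinite (F K))
    (hlim : ∀ M N, Tendsto (fun K => F K M N) atTop (𝓝 (f M N))) : IsPositiveDefinite f :=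
  fun N z c => ge_of_tendsto' (tendsto_finsetSum _ fun _ _ => tendsto_finsetSum _ fun _ _ =>
    ((Complex.continuous_ofReal.tendsto _).comp (hlim _ _)).const_mul _) fun K => hF K N z c

theorem isPositiveDefinite_of_eq_sum_mul {f : ℤ → ℤ → ℝ} {ι : Type*} (s : Finset ι)
    (φ : ι → ℤ × ℤ → ℝ)
    (hf : ∀ x y : ℤ × ℤ, f (x.1 - y.1) (x.2 - y.2) = ∑ p ∈ s, φ p y * φ p x) :
    IsPositiveDefinite f := by
  intro N z c
  have h : ∑ i, ∑ j, c i * star (c j) * (f ((z i).1 - (z j).1) ((z i).2 - (z j).2) : ℂ)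
      = ∑ p ∈ s, (∑ i, c i * φ p (z i)) * star (∑ j, c j * φ p (z j)) := by
    simp only [hf, star_sum, star_mul', Complex.star_def, Complex.conj_ofReal,
      Complex.ofReal_sum, Complex.ofReal_mul, mul_sum, sum_mul]
    refine (sum_congr rfl fun i _ => sum_comm).trans ?_
    rw [sum_comm]
    refine sum_congr rfl fun p _ => ?_
    rw [sum_comm]
    exact sum_congr rfl fun j _ => sum_congr rfl fun i _ => by ring
  rw [h]
  exact sum_nonneg fun p _ => mul_star_self_nonneg _

theorem Function.Periodic.sum_range_add {M : Type*} [AddCommMonoid M] {f : ℤ → M} {L : ℕ}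
    (hf : Function.Periodic f L) (t : ℤ) : ∑ i ∈ range L, f (i + t) = ∑ i ∈ range L, f i := by
  have hstep : ∀ t : ℤ, ∑ i ∈ range L, f (i + (t + 1)) = ∑ i ∈ range L, f (i + t) := by
    intro t
    cases L with
    | zero => simp
    | succ L =>
      rw [sum_range_succ, sum_range_succ']
      congr 1
      · exact sum_congr rfl fun i _ => by push_cast; ring_nf
      · simpa [add_comm, add_left_comm] using hf t
  induction t using Int.induction_on with
  | zero => simp
  | succ t ih => exact (hstep t).trans ih
  | pred t ih => rw [← hstep, sub_add_cancel]; exact ih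

def autocorr (L : ℕ) (p : ℤ → ℤ → ℝ) (M N : ℤ) : ℝ :=
  ∑ i ∈ range L, ∑ j ∈ range L, p i j * p (i + M) (j + N)

theorem autocorr_sub {L : ℕ} {p : ℤ → ℤ → ℝ} (h₁ : ∀ m n, p (m + L) n = p m n)
    (h₂ : ∀ m n, p m (n + L) = p m n) (x y : ℤ × ℤ) :
    autocorr L p (x.1 - y.1) (x.2 - y.2)
      = ∑ i ∈ range L, ∑ j ∈ range L, p (i + y.1) (j + y.2) * p (i + x.1) (j + x.2) := by
  refine (Function.Periodic.sum_range_add (f := fun i : ℤ => ∑ j ∈ range L,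
    p i j * p (i + (x.1 - y.1)) (j + (x.2 - y.2)))
    (fun i => by simp only [add_right_comm _ (L : ℤ), h₁]) y.1).symm.trans
    (sum_congr rfl fun i _ => ?_)
  refine (Function.Periodic.sum_range_add (f := fun j : ℤ =>
    p (i + y.1) j * p (i + y.1 + (x.1 - y.1)) (j + (x.2 - y.2)))
    (fun j => by simp only [add_right_comm _ (L : ℤ), h₂]) y.2).symm.trans ?_
  simp only [add_add_sub_cancel]

theorem isPositiveDefinite_autocorr {L : ℕ} {p : ℤ → ℤ → ℝ}
    (h₁ : ∀ m n, p (m + L) n = p m n) (h₂ : ∀ m n, p m (n + L) = p m n) :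
    IsPositiveDefinite (autocorr L p) :=
  isPositiveDefinite_of_eq_sum_mul (range L ×ˢ range L) (fun ij x => p (ij.1 + x.1) (ij.2 + x.2))
    fun x y => by rw [autocorr_sub h₁ h₂, sum_product]

noncomputable def squiralPattern : ℕ → ℤ → ℤ → ℝ
  | 0, _, _ => 1
  | K + 1, m, n => squiralSign (m % 3) (n % 3) * squiralPattern K (m / 3) (n / 3)

theorem squiralPattern_mul_self (K : ℕ) (m n : ℤ) :
    squiralPattern K m n * squiralPattern K m n = 1 := by
  induction K generalizing m n with
  | zero => simp [squiralPattern]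
  | succ K ih =>
    rw [squiralPattern, mul_mul_mul_comm, ih]
    unfold squiralSign
    split_ifs <;> norm_num

theorem squiralPattern_add_three_pow_mul (K : ℕ) (m n a b : ℤ) :
    squiralPattern K (m + 3 ^ K * a) (n + 3 ^ K * b) = squiralPattern K m n := by
  induction K generalizing m n with
  | zero => simp [squiralPattern]
  | succ K ih =>
    simp only [squiralPattern, pow_succ', mul_assoc, Int.add_mul_emod_self_left,
      Int.add_mul_ediv_left _ _ three_ne_zero, ih]

theorem squiralPattern_three_mul_add (K : ℕ) (u v : ℤ) {d₁ d₂ : ℕ} (h₁ : d₁ < 3) (h₂ : d₂ < 3) :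
    squiralPattern (K + 1) (3 * u + d₁) (3 * v + d₂)
      = squiralSign d₁ d₂ * squiralPattern K u v := by
  rw [squiralPattern]
  congr 2 <;> omega

theorem sum_range_three_mul {M : Type*} [AddCommMonoid M] (L : ℕ) (F : ℕ → M) :
    ∑ i ∈ range (3 * L), F i = ∑ u ∈ range L, ∑ d ∈ range 3, F (3 * u + d) := by
  induction L with
  | zero => simp
  | succ L ih =>
    rw [mul_add_one, sum_range_add, ih, sum_range_succ (fun u => ∑ d ∈ range 3, F (3 * u + d))]

theorem autocorr_squiralPattern_succ (K : ℕ) (m n : ℤ) (r s : ℕ) :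
    autocorr (3 ^ (K + 1)) (squiralPattern (K + 1)) (3 * m + r) (3 * n + s)
      = ∑ d ∈ range 3 ×ˢ range 3,
          squiralSign d.1 d.2 * squiralSign ↑((d.1 + r) % 3) ↑((d.2 + s) % 3) *
            autocorr (3 ^ K) (squiralPattern K) (m + ↑((d.1 + r) / 3)) (n + ↑((d.2 + s) / 3)) := by
  have hterm : ∀ u v d₁ d₂ : ℕ, d₁ < 3 → d₂ < 3 →
      squiralPattern (K + 1) ↑(3 * u + d₁) ↑(3 * v + d₂) *
        squiralPattern (K + 1) (↑(3 * u + d₁) + (3 * m + r)) (↑(3 * v + d₂) + (3 * n + s))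
      = squiralSign d₁ d₂ * squiralSign ↑((d₁ + r) % 3) ↑((d₂ + s) % 3) *
          (squiralPattern K u v *
            squiralPattern K (u + (m + ↑((d₁ + r) / 3))) (v + (n + ↑((d₂ + s) / 3)))) := by
    intro u v d₁ d₂ h₁ h₂
    have e₁ : (↑(3 * u + d₁) : ℤ) + (3 * m + r)
        = 3 * (u + (m + ↑((d₁ + r) / 3))) + ↑((d₁ + r) % 3) := by omega
    have e₂ : (↑(3 * v + d₂) : ℤ) + (3 * n + s)
        = 3 * (v + (n + ↑((d₂ + s) / 3))) + ↑((d₂ + s) % 3) := by omega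
    rw [e₁, e₂, squiralPattern_three_mul_add K _ _ (Nat.mod_lt _ three_pos)
      (Nat.mod_lt _ three_pos), Nat.cast_add, Nat.cast_add, Nat.cast_mul, Nat.cast_mul,
      Nat.cast_ofNat, squiralPattern_three_mul_add K _ _ h₁ h₂]
    ring
  rw [sum_product]
  unfold autocorr
  calc _ = ∑ u ∈ range (3 ^ K), ∑ d₁ ∈ range 3, ∑ v ∈ range (3 ^ K), ∑ d₂ ∈ range 3,
          squiralSign d₁ d₂ * squiralSign ↑((d₁ + r) % 3) ↑((d₂ + s) % 3) *
            (squiralPattern K u v *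
              squiralPattern K (u + (m + ↑((d₁ + r) / 3))) (v + (n + ↑((d₂ + s) / 3)))) := by
        rw [pow_succ', sum_range_three_mul]
        refine sum_congr rfl fun u _ => sum_congr rfl fun d₁ hd₁ => ?_
        rw [sum_range_three_mul]
        exact sum_congr rfl fun v _ => sum_congr rfl fun d₂ hd₂ =>
          hterm u v d₁ d₂ (mem_range.1 hd₁) (mem_range.1 hd₂)
    _ = _ := by
        rw [sum_comm]
        refine sum_congr rfl fun d₁ _ => ?_
        refine ((sum_congr rfl fun u _ => sum_comm).trans sum_comm).trans ?_
        simp only [mul_sum]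

theorem sum_squiralSign_mul_eq {r s : ℕ} (hr : r < 3) (hs : s < 3) (G : ℕ → ℕ → ℝ) :
    ∑ d ∈ range 3 ×ˢ range 3,
        squiralSign d.1 d.2 * squiralSign ↑((d.1 + r) % 3) ↑((d.2 + s) % 3) *
          G ((d.1 + r) / 3) ((d.2 + s) / 3)
      = 9 * ∑ k ∈ range 2, ∑ l ∈ range 2, squiralCoeff r s k l * G k l := by
  rw [← sum_fiberwise_of_maps_to (g := fun d => ((d.1 + r) / 3, (d.2 + s) / 3))
    (t := range 2 ×ˢ range 2) (fun d hd => by simp only [mem_product, mem_range] at hd ⊢; omega),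
    sum_product, mul_sum]
  refine sum_congr rfl fun k _ => ?_
  rw [mul_sum]
  refine sum_congr rfl fun l _ => ?_
  rw [squiralCoeff, mul_assoc, mul_inv_cancel_left₀ (by norm_num), sum_mul]
  refine sum_congr rfl fun d hd => ?_
  obtain ⟨h₁, h₂⟩ := Prod.mk.inj (mem_filter.1 hd).2
  rw [h₁, h₂]

noncomputable def squiralCorr (K : ℕ) (M N : ℤ) : ℝ :=
  (9 ^ K)⁻¹ * autocorr (3 ^ K) (squiralPattern K) M N

theorem squiralRel_squiralCorr (K : ℕ) : SquiralRel (squiralCorr (K + 1)) (squiralCorr K) := by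
  intro m n r s hr hs
  rw [squiralCorr, autocorr_squiralPattern_succ, sum_squiralSign_mul_eq hr hs
    (fun k l => autocorr (3 ^ K) (squiralPattern K) (m + k) (n + l)), pow_succ, mul_inv,
    mul_assoc, inv_mul_cancel_left₀ (by norm_num), mul_sum]
  simp only [squiralCorr, mul_sum, mul_left_comm]

theorem squiralCorr_zero_zero (K : ℕ) : squiralCorr K 0 0 = 1 := by
  simp only [squiralCorr, autocorr, add_zero, squiralPattern_mul_self, sum_const, card_range,
    nsmul_eq_mul, Nat.cast_pow, Nat.cast_ofNat, mul_one, ← mul_pow]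
  norm_num

theorem squiralCorr_zero (M N : ℤ) : squiralCorr 0 M N = 1 := by
  simp [squiralCorr, autocorr, squiralPattern]

theorem isPositiveDefinite_squiralCorr (K : ℕ) : IsPositiveDefinite (squiralCorr K) :=
  (isPositiveDefinite_autocorr
    (fun m n => by simpa using squiralPattern_add_three_pow_mul K m n 1 0)
    (fun m n => by simpa using squiralPattern_add_three_pow_mul K m n 0 1)).const_mul
    (by positivity)

open Filter Topology in
theorem SquiralRec.tendsto_squiralCorr {η : ℤ → ℤ → ℝ} (hη : SquiralRec η) (hη₀ : η 0 0 = 1)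
    (M N : ℤ) : Tendsto (fun K => squiralCorr K M N) atTop (𝓝 (η M N)) := by
  rw [← tendsto_sub_nhds_zero_iff]
  refine tendsto_zero_of_squiralRel_succ (D := fun K m n => squiralCorr K m n - η m n)
    (fun K => (squiralRel_squiralCorr K).sub hη.squiralRel)
    (fun K => by simp [squiralCorr_zero_zero, hη₀]) (c := 4 / 3) (fun M N hM hN => ?_) M N
  dsimp only
  rw [squiralCorr_zero, hη.apply_eq_squiralCentral_mul hM hN, hη₀, squiralCentral]
  split_ifs <;> norm_num [abs_of_nonneg]

theorem SquiralRec.isPositiveDefinite {η : ℤ → ℤ → ℝ} (hη : SquiralRec η) (hη₀ : η 0 0 = 1) :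
    IsPositiveDefinite η :=
  IsPositiveDefinite.of_tendsto isPositiveDefinite_squiralCorr (hη.tendsto_squiralCorr hη₀)

theorem SquiralRec.apply_three_pow_mul {f : ℤ → ℤ → ℝ} (hf : SquiralRec f) (k : ℕ) (m n : ℤ) :
    f (3 ^ k * m) (3 ^ k * n) = f m n := by
  induction k with
  | zero => simp
  | succ k ih => rw [pow_succ', mul_assoc, mul_assoc, (hf _ _).1, ih]

theorem squiral_solution_proportional (a : ℝ) (ha : 0 ≤ a)
    (ζ η : ℤ → ℤ → ℝ) (hζrec : SquiralRec ζ) (hζ0 : ζ 0 0 = a)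
    (hηrec : SquiralRec η) (hη0 : η 0 0 = 1) :
    (∀ m n : ℤ, ζ m n = a * η m n) ∧
    (∀ (N : ℕ) (z : Fin N → ℤ × ℤ) (c : Fin N → ℂ),
      0 ≤ (∑ i, ∑ j, c i * star (c j) *
        (ζ ((z i).1 - (z j).1) ((z i).2 - (z j).2) : ℂ)).re ∧
      (∑ i, ∑ j, c i * star (c j) *
        (ζ ((z i).1 - (z j).1) ((z i).2 - (z j).2) : ℂ)).im = 0) ∧
    (0 < a → ζ 1 1 = a / 6 ∧ ζ 1 1 ≠ 0 ∧
      ∀ k : ℕ, ζ ((3:ℤ)^k) ((3:ℤ)^k) = ζ 1 1) := by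
  have hprop : ∀ m n, ζ m n = a * η m n := fun m n => by
    rw [hζrec.apply_eq_apply_zero_zero_mul hηrec hη0, hζ0]
  have hζ₁₁ : ζ 1 1 = a / 6 := by
    rw [hprop, hηrec.apply_eq_squiralCentral_mul (by norm_num) (by norm_num), hη0, squiralCentral]
    norm_num
    ring
  refine ⟨hprop, fun N z c => ?_, fun ha' => ⟨hζ₁₁, by rw [hζ₁₁]; positivity, fun k => ?_⟩⟩
  · have hpos := (hηrec.isPositiveDefinite hη0).const_mul ha N z c
    simp only [← hprop] at hpos
    exact ⟨(Complex.nonneg_iff.1 hpos).1, (Complex.nonneg_iff.1 hpos).2.symm⟩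
  · simpa using hζrec.apply_three_pow_mul k 1 1
end
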